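/- arXiv:1303.0702 — 6 statements merged into one kernel-verified Lean document; each statement's English description precedes it below -/
import Mathlib

section
/- Let B be a simple 𝔟-module lying in the category O_𝔟. Then ord_𝔟(v) is finite and equal to ord_𝔟(B) for every nonzero v ∈ B; moreover ord_𝔟(B) = 0 if and only if B is one-dimensional. -/
/-- A representation of the Witt algebra `𝔚 = span{d_i : i ≥ -1}`, encoded by the family of
operators `d i` (only the indices `i ≥ -1` are relevant) satisfying
`[d_m, d_n] = (n - m) d_{m+n}`. -/
structure WittRep (W : Type*) [AddCommGroup W] [Module ℂ W] where
  d : ℤ → W →ₗ[ℂ] W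
  comm : ∀ m n : ℤ, -1 ≤ m → -1 ≤ n →
    d m ∘ₗ d n - d n ∘ₗ d m = (((n - m : ℤ) : ℂ)) • d (m + n)

namespace WittRep

variable {W : Type*} [AddCommGroup W] [Module ℂ W]

/-- Condition A : the module lies in the category `O_𝔚`. -/
def InO (ρ : WittRep W) : Prop :=
  ∀ v : W, ∃ n : ℕ, ∀ i : ℤ, (n : ℤ) ≤ i → ρ.d i v = 0

/-- The module is trivial: the Lie algebra acts by zero. -/
def IsTrivial (ρ : WittRep W) : Prop := ∀ i : ℤ, -1 ≤ i → ρ.d i = 0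

/-- A `𝔚`-submodule. -/
def Invariant (ρ : WittRep W) (U : Submodule ℂ W) : Prop :=
  ∀ i : ℤ, -1 ≤ i → ∀ u ∈ U, ρ.d i u ∈ U

/-- Simplicity of a `𝔚`-module. -/
def IsSimple (ρ : WittRep W) : Prop :=
  (∃ v : W, v ≠ 0) ∧ ∀ U : Submodule ℂ W, ρ.Invariant U → U = ⊥ ∨ U = ⊤

/-- A `𝔟`-submodule (`𝔟 = span{d_i : i ≥ 0}`). -/
def BInvariant (ρ : WittRep W) (U : Submodule ℂ W) : Prop :=
  ∀ i : ℤ, 0 ≤ i → ∀ u ∈ U, ρ.d i u ∈ U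

/-- The socle `Soc_𝔟(W)`: the sum of the minimal nonzero `𝔟`-submodules. -/
def Soc (ρ : WittRep W) : Submodule ℂ W :=
  sSup {U | ρ.BInvariant U ∧ U ≠ ⊥ ∧
    ∀ U' : Submodule ℂ W, ρ.BInvariant U' → U' ≠ ⊥ → U' ≤ U → U' = U}

/-- `w₀` is a highest weight vector of weight `b'`. -/
def IsHW (ρ : WittRep W) (w₀ : W) (b' : ℂ) : Prop :=
  w₀ ≠ 0 ∧ ρ.d 0 w₀ = b' • w₀ ∧ ∀ i : ℤ, 1 ≤ i → ρ.d i w₀ = 0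

/-- `w₀` generates the `𝔚`-module. -/
def Generates (ρ : WittRep W) (w₀ : W) : Prop :=
  ∀ U : Submodule ℂ W, ρ.Invariant U → w₀ ∈ U → U = ⊤

/-- The operator `e^{kt} d/dt = Σ_{i ≥ 0} (k^i/i!) d_{i-1}` (a finite sum on each vector of a
module in `O_𝔚`). -/
noncomputable def E (ρ : WittRep W) (k : ℤ) (w : W) : W :=
  ∑ᶠ i : ℕ, (((k : ℂ) ^ i) / (Nat.factorial i : ℂ)) • ρ.d ((i : ℤ) - 1) w

/-- The action of `d_k` on `L(W, λ, a, b) = W ⊗ ℂ[t, t⁻¹]`, realized on `ℤ →₀ W`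
(`w ⊗ t^j ↦ Finsupp.single j w`):
`d_k · (w ⊗ t^j) = ((λ^k e^{kt} − 1) d/dt + a + kb + j) w ⊗ t^{k+j}`. -/
noncomputable def Lact (ρ : WittRep W) (lam a b : ℂ) (k : ℤ) (f : ℤ →₀ W) : ℤ →₀ W :=
  f.sum fun j w => Finsupp.single (k + j)
    (lam ^ k • ρ.E k w - ρ.d (-1) w + (a + (k : ℂ) * b + (j : ℂ)) • w)

/-- The PBW map `ℕ →₀ ℂ → W`, `(k, c) ↦ c • d_{-1}^k w₀`. -/
noncomputable def pbwMap (ρ : WittRep W) (w₀ : W) : (ℕ →₀ ℂ) →ₗ[ℂ] W :=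
  Finsupp.lsum ℂ fun k : ℕ => ((ρ.d (-1)) ^ k) ∘ₗ LinearMap.toSpanSingleton ℂ W w₀

/-- `W` is the Verma `𝔚`-module with highest weight vector `w₀` of highest weight `b'`. -/
def IsVerma (ρ : WittRep W) (w₀ : W) (b' : ℂ) : Prop :=
  ρ.d 0 w₀ = b' • w₀ ∧ (∀ i : ℤ, 1 ≤ i → ρ.d i w₀ = 0) ∧
    Function.Bijective (ρ.pbwMap w₀)

/-- `W^{(n)} = Σ_{i=0}^n d_{-1}^i (Soc_𝔟 W)`. -/
noncomputable def Wn (ρ : WittRep W) (n : ℕ) : Submodule ℂ W :=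
  ⨆ i : Fin (n + 1), Submodule.map ((ρ.d (-1)) ^ (i : ℕ)) ρ.Soc

/-- `L₀(a, b') = span{d₁^i · (w₀ ⊗ t^{2j})} ⊆ L(W, -1, a, b' + 1)`. -/
noncomputable def Lzero (ρ : WittRep W) (a b' : ℂ) (w₀ : W) : Submodule ℂ (ℤ →₀ W) :=
  Submodule.span ℂ
    {g | ∃ (i : ℕ) (j : ℤ), g = (ρ.Lact (-1) a (b' + 1) 1)^[i] (Finsupp.single (2 * j) w₀)}

/-- `L₁(a, b') = span{d₁^i · (w₀ ⊗ t^{2j+1})} ⊆ L(W, -1, a, b' + 1)`. -/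
noncomputable def Lone (ρ : WittRep W) (a b' : ℂ) (w₀ : W) : Submodule ℂ (ℤ →₀ W) :=
  Submodule.span ℂ
    {g | ∃ (i : ℕ) (j : ℤ), g = (ρ.Lact (-1) a (b' + 1) 1)^[i] (Finsupp.single (2 * j + 1) w₀)}

end WittRep

/-- A representation of the Lie algebra `𝔟 = span{d_i : i ≥ 0}`. -/
structure BRep (B : Type*) [AddCommGroup B] [Module ℂ B] where
  d : ℕ → B →ₗ[ℂ] B
  comm : ∀ m n : ℕ, d m ∘ₗ d n - d n ∘ₗ d m = (((n : ℂ) - (m : ℂ))) • d (m + n)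

namespace BRep

variable {B : Type*} [AddCommGroup B] [Module ℂ B]

/-- Condition A : the module lies in the category `O_𝔟`. -/
def InO (ρ : BRep B) : Prop := ∀ v : B, ∃ n : ℕ, ∀ i : ℕ, n ≤ i → ρ.d i v = 0

def IsTrivial (ρ : BRep B) : Prop := ∀ i : ℕ, ρ.d i = 0

def IsSimple (ρ : BRep B) : Prop :=
  (∃ v : B, v ≠ 0) ∧
    ∀ U : Submodule ℂ B, (∀ i : ℕ, ∀ u ∈ U, ρ.d i u ∈ U) → U = ⊥ ∨ U = ⊤

/-- The set of `r ∈ ℤ≥0` such that `d_{r+i} v = 0` for all `i ≥ 1`;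
`ord_𝔟(v)` is its least element. -/
def ordSet (ρ : BRep B) (v : B) : Set ℕ := {r : ℕ | ∀ i : ℕ, r + 1 ≤ i → ρ.d i v = 0}

/-- The action of `d_m` on the Virasoro module `N(B_(c), a) = B ⊗ ℂ[t, t⁻¹]`, realized on
`ℤ →₀ B`:  `d_m · (w ⊗ t^j) = (Σ_{i≥1} (m^i/i!) d_{i-1} + mc + a + j) w ⊗ t^{m+j}`
(`c` is the twist of the `d₀`-action; `c = 0` gives `N(B, a)`). -/
noncomputable def Nact (ρ : BRep B) (a c : ℂ) (m : ℤ) (f : ℤ →₀ B) : ℤ →₀ B :=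
  f.sum fun j w => Finsupp.single (m + j)
    ((∑ᶠ i : ℕ, (((m : ℂ) ^ (i + 1)) / (Nat.factorial (i + 1) : ℂ)) • ρ.d i w) +
      ((m : ℂ) * c + a + (j : ℂ)) • w)

end BRep

/-- For a family `U : ℤ → Submodule ℂ W`, the subspace `⊕_j U j ⊗ t^j` of `W ⊗ ℂ[t,t⁻¹]`. -/
def gradedSub {W : Type*} [AddCommGroup W] [Module ℂ W] (U : ℤ → Submodule ℂ W) :
    Submodule ℂ (ℤ →₀ W) where
  carrier := {f | ∀ j, f j ∈ U j}
  add_mem' := fun hf hg j => by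
    simpa only [Finsupp.add_apply] using (U j).add_mem (hf j) (hg j)
  zero_mem' := fun j => by simp
  smul_mem' := fun c f hf j => by
    simpa only [Finsupp.smul_apply] using (U j).smul_mem c (hf j)

/-- A submodule invariant under a (ℤ-indexed) family of operators. -/
def ActInvariant {V : Type*} [AddCommGroup V] [Module ℂ V] (act : ℤ → V → V)
    (M : Submodule ℂ V) : Prop :=
  ∀ k : ℤ, ∀ u ∈ M, act k u ∈ M

/-- Simplicity of the module given by a family of operators (the central element acts by zero). -/
def ActSimple {V : Type*} [AddCommGroup V] [Module ℂ V] (act : ℤ → V → V) : Prop :=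
  (∃ v : V, v ≠ 0) ∧ ∀ M : Submodule ℂ V, ActInvariant act M → M = ⊥ ∨ M = ⊤

/-- A representation of the Virasoro algebra. -/
structure VirasoroRep (V : Type*) [AddCommGroup V] [Module ℂ V] where
  d : ℤ → V →ₗ[ℂ] V
  z : V →ₗ[ℂ] V
  comm : ∀ m n : ℤ, d m ∘ₗ d n - d n ∘ₗ d m =
    (((n - m : ℤ) : ℂ)) • d (m + n) +
      (if m + n = 0 then (((n : ℂ) ^ 3 - (n : ℂ)) / 12) else 0) • z
  comm_z : ∀ m : ℤ, d m ∘ₗ z = z ∘ₗ d m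

section AuxStmt0

open Polynomial

variable {B : Type*} [AddCommGroup B] [Module ℂ B]

private lemma eigen_aux0 (f : B →ₗ[ℂ] B) (v : B) (hv : v ≠ 0) :
    ∀ n : ℕ, ∀ p : ℂ[X], p.natDegree = n → p ≠ 0 → (aeval f p) v = 0 →
      ∃ (w : B) (lam : ℂ), w ≠ 0 ∧ f w = lam • w := by
  intro n
  induction n using Nat.strong_induction_on with
  | _ n ih =>
    intro p hdeg hp hpv
    rcases Nat.eq_zero_or_pos n with h0 | hpos
    · subst h0
      obtain ⟨c, rfl⟩ := Polynomial.natDegree_eq_zero.mp hdeg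
      have hc : c ≠ 0 := by simpa using hp
      have hcv : c • v = 0 := by
        simpa [Polynomial.aeval_C, Algebra.algebraMap_eq_smul_one] using hpv
      rcases smul_eq_zero.mp hcv with h | h
      · exact absurd h hc
      · exact absurd h hv
    · have hdeg' : 0 < p.degree := by
        rw [Polynomial.degree_eq_natDegree hp, hdeg]
        exact_mod_cast hpos
      obtain ⟨lam, hlam⟩ := Complex.exists_root hdeg'
      obtain ⟨q, hq⟩ := Polynomial.dvd_iff_isRoot.mpr hlam
      have hq0 : q ≠ 0 := by
        rintro rfl
        rw [mul_zero] at hq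
        exact hp hq
      have hdq : q.natDegree < n := by
        have h1 : p.natDegree = 1 + q.natDegree := by
          rw [hq, Polynomial.natDegree_mul (Polynomial.X_sub_C_ne_zero lam) hq0,
            Polynomial.natDegree_X_sub_C]
        omega
      by_cases hw0 : (aeval f q) v = 0
      · exact ih q.natDegree hdq q rfl hq0 hw0
      · refine ⟨(aeval f q) v, lam, hw0, ?_⟩
        have h1 : (aeval f (X - C lam)) ((aeval f q) v) = 0 := by
          rw [← Module.End.mul_apply, ← map_mul, ← hq, hpv]
        have h2 : f ((aeval f q) v) - lam • ((aeval f q) v) = 0 := by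
          simpa [Polynomial.aeval_X, Polynomial.aeval_C, Algebra.algebraMap_eq_smul_one,
            LinearMap.sub_apply, LinearMap.smul_apply] using h1
        exact sub_eq_zero.mp h2

private lemma exists_eigen0 (f : B →ₗ[ℂ] B)
    (hsimp : ∀ U : Submodule ℂ B, (∀ u ∈ U, f u ∈ U) → U = ⊥ ∨ U = ⊤)
    (v : B) (hv : v ≠ 0) :
    ∃ (w : B) (lam : ℂ), w ≠ 0 ∧ f w = lam • w := by
  by_cases hann : ∃ p : ℂ[X], p ≠ 0 ∧ (aeval f p) v = 0
  · obtain ⟨p, hp0, hpv⟩ := hann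
    exact eigen_aux0 f v hv p.natDegree p rfl hp0 hpv
  · exfalso
    push_neg at hann
    set M := Submodule.span ℂ (Set.range fun k : ℕ => (f ^ (k + 1)) v) with hM
    have hMinv : ∀ u ∈ M, f u ∈ M := by
      intro u hu
      induction hu using Submodule.span_induction with
      | mem x hx =>
        obtain ⟨k, rfl⟩ := hx
        refine Submodule.subset_span ⟨k + 1, ?_⟩
        simp only [pow_succ' f (k + 1), Module.End.mul_apply]
      | zero => simpa using Submodule.zero_mem M
      | add x y hx hy ihx ihy => simpa [map_add] using Submodule.add_mem M ihx ihy
      | smul c x hx ihx => simpa [map_smul] using Submodule.smul_mem M c ihx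
    rcases hsimp M hMinv with hbot | htop
    · have hfv : f v ∈ M := Submodule.subset_span ⟨0, by simp⟩
      rw [hbot, Submodule.mem_bot] at hfv
      exact hann X Polynomial.X_ne_zero (by simpa using hfv)
    · have hvM : v ∈ M := htop ▸ Submodule.mem_top
      rw [hM, Finsupp.mem_span_range_iff_exists_finsupp] at hvM
      obtain ⟨c, hc⟩ := hvM
      set p : ℂ[X] := 1 - c.sum fun k a => C a * X ^ (k + 1) with hp
      have hval : (aeval f p) v = 0 := by
        have : (aeval f p) v
            = v - c.sum fun k a => a • ((f ^ (k + 1)) v) := by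
          simp only [hp, Finsupp.sum, map_sub, map_one, map_sum, LinearMap.sub_apply,
            Module.End.one_apply, LinearMap.coe_sum, Finset.sum_apply, map_mul,
            Polynomial.aeval_C, Polynomial.aeval_X_pow, Module.End.mul_apply,
            Module.algebraMap_end_apply]
        rw [this, hc, sub_self]
      have hp0 : p ≠ 0 := by
        intro h
        have hcoeff : p.coeff 0 = 1 := by
          rw [hp]
          simp only [Polynomial.coeff_sub, Polynomial.coeff_one]
          have : (c.sum fun k a => C a * X ^ (k + 1)).coeff 0 = 0 := by
            rw [Finsupp.sum, Polynomial.finset_sum_coeff]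
            refine Finset.sum_eq_zero fun k _ => ?_
            simp [Polynomial.coeff_X_pow]
          rw [this]
          norm_num
        rw [h] at hcoeff
        simp at hcoeff
      exact hann p hp0 hval

private def Ur0 (ρ : BRep B) (r : ℕ) : Submodule ℂ B where
  carrier := {v | ∀ i : ℕ, r + 1 ≤ i → ρ.d i v = 0}
  add_mem' := by
    intro a b ha hb i hi
    rw [map_add, ha i hi, hb i hi, add_zero]
  zero_mem' := fun i _ => map_zero _
  smul_mem' := by
    intro t a ha i hi
    rw [map_smul, ha i hi, smul_zero]

private lemma mem_Ur0 (ρ : BRep B) (r : ℕ) (v : B) :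
    v ∈ Ur0 ρ r ↔ ∀ i : ℕ, r + 1 ≤ i → ρ.d i v = 0 := Iff.rfl

private lemma Ur0_inv (ρ : BRep B) (r : ℕ) :
    ∀ m : ℕ, ∀ u ∈ Ur0 ρ r, ρ.d m u ∈ Ur0 ρ r := by
  intro m u hu i hi
  have h := LinearMap.ext_iff.mp (ρ.comm m i) u
  simp only [LinearMap.sub_apply, LinearMap.comp_apply, LinearMap.smul_apply] at h
  rw [(mem_Ur0 ρ r u).mp hu i hi, map_zero,
    (mem_Ur0 ρ r u).mp hu (m + i) (le_trans hi (Nat.le_add_left i m)), smul_zero,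
    zero_sub, neg_eq_zero] at h
  exact h

end AuxStmt0


theorem stmt0 {B : Type*} [AddCommGroup B] [Module ℂ B] (ρ : BRep B)
    (hO : ρ.InO) (hs : ρ.IsSimple) :
    (∀ v : B, v ≠ 0 → (ρ.ordSet v).Nonempty) ∧
    (∀ v w : B, v ≠ 0 → w ≠ 0 → sInf (ρ.ordSet v) = sInf (ρ.ordSet w)) ∧
    (∀ v : B, v ≠ 0 → (sInf (ρ.ordSet v) = 0 ↔ Module.finrank ℂ B = 1)) := by
  obtain ⟨⟨v₀, hv₀⟩, hsimp⟩ := hs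
  have hne : ∀ v : B, (ρ.ordSet v).Nonempty := by
    intro v
    obtain ⟨n, hn⟩ := hO v
    exact ⟨n, fun i hi => hn i (by omega)⟩
  have hkey : ∀ v : B, v ≠ 0 → ρ.ordSet v = {r | Ur0 ρ r = ⊤} := by
    intro v hv
    ext r
    constructor
    · intro hr
      rcases hsimp (Ur0 ρ r) (Ur0_inv ρ r) with hbot | htop
      · exfalso
        have : v ∈ Ur0 ρ r := hr
        rw [hbot, Submodule.mem_bot] at this
        exact hv this
      · exact htop
    · intro hr
      have : v ∈ Ur0 ρ r := (hr : Ur0 ρ r = ⊤) ▸ Submodule.mem_top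
      exact this
  refine ⟨fun v hv => hne v, fun v w hv hw => by rw [hkey v hv, hkey w hw], ?_⟩
  intro v hv
  constructor
  · intro h0
    have h0mem : (0 : ℕ) ∈ ρ.ordSet v := h0 ▸ Nat.sInf_mem (hne v)
    have htop : Ur0 ρ 0 = ⊤ := by
      have : (0 : ℕ) ∈ {r | Ur0 ρ r = ⊤} := (hkey v hv) ▸ h0mem
      exact this
    have hzero : ∀ i : ℕ, 1 ≤ i → ρ.d i = 0 := by
      intro i hi
      ext u
      have hu : u ∈ Ur0 ρ 0 := htop ▸ Submodule.mem_top
      simpa using hu i (by omega)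
    obtain ⟨w, lam, hw0, hfw⟩ := exists_eigen0 (ρ.d 0)
      (fun U hU => hsimp U (fun i u hu => by
        match i with
        | 0 => exact hU u hu
        | (j + 1) =>
          rw [hzero (j + 1) (by omega)]
          simpa using Submodule.zero_mem U)) v hv
    have hspan : Submodule.span ℂ {w} = ⊤ := by
      rcases hsimp (Submodule.span ℂ {w}) (fun i u hu => by
        match i with
        | 0 =>
          obtain ⟨t, rfl⟩ := Submodule.mem_span_singleton.mp hu
          rw [map_smul, hfw]
          exact Submodule.smul_mem _ t (Submodule.smul_mem _ lam (Submodule.mem_span_singleton_self w))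
        | (j + 1) =>
          rw [hzero (j + 1) (by omega)]
          simpa using Submodule.zero_mem _) with hbot | htop
      · exfalso
        have := Submodule.mem_span_singleton_self w (R := ℂ)
        rw [hbot, Submodule.mem_bot] at this
        exact hw0 this
      · exact htop
    exact (finrank_eq_one_iff_of_nonzero w hw0).mpr hspan
  · intro hdim
    have hspan : Submodule.span ℂ {v} = ⊤ := (finrank_eq_one_iff_of_nonzero v hv).mp hdim
    have hcoef : ∀ i : ℕ, ∃ t : ℂ, ρ.d i v = t • v := by
      intro i
      obtain ⟨t, ht⟩ := Submodule.mem_span_singleton.mp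
        (show ρ.d i v ∈ Submodule.span ℂ {v} from hspan ▸ Submodule.mem_top)
      exact ⟨t, ht.symm⟩
    obtain ⟨c0, hc0⟩ := hcoef 0
    have h0 : (0 : ℕ) ∈ ρ.ordSet v := by
      intro i hi
      obtain ⟨ci, hci⟩ := hcoef i
      have h := LinearMap.ext_iff.mp (ρ.comm 0 i) v
      simp only [LinearMap.sub_apply, LinearMap.comp_apply, LinearMap.smul_apply] at h
      rw [hci, hc0, map_smul, map_smul, hci, hc0, smul_comm c0 ci, sub_self] at h
      have hi0 : ((i : ℂ) - ((0 : ℕ) : ℂ)) ≠ 0 := by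
        simp only [Nat.cast_zero, sub_zero, Nat.cast_ne_zero]
        omega
      have := (smul_eq_zero.mp h.symm).resolve_left hi0
      rwa [zero_add] at this
    exact Nat.sInf_eq_zero.mpr (Or.inl h0)
end

section
/- Let B be a nontrivial simple 𝔟-module lying in the category O_𝔟 and let r = ord_𝔟(B). Then the action of d_r on B is bijective. -/
namespace BRep

variable {B : Type*} [AddCommGroup B] [Module ℂ B] (ρ : BRep B)

lemma comm_apply (m n : ℕ) (w : B) :
    ρ.d m (ρ.d n w) - ρ.d n (ρ.d m w) = ((n : ℂ) - (m : ℂ)) • ρ.d (m + n) w := by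
  simpa using congrArg (fun L : B →ₗ[ℂ] B => L w) (ρ.comm m n)

def IsInvariant (U : Submodule ℂ B) : Prop := ∀ i : ℕ, ∀ u ∈ U, ρ.d i u ∈ U

variable {ρ}

lemma IsSimple.eq_top_of_mem (hs : ρ.IsSimple) {U : Submodule ℂ B} (hU : ρ.IsInvariant U)
    {v : B} (hv : v ≠ 0) (hvU : v ∈ U) : U = ⊤ :=
  (hs.2 U hU).resolve_left fun h => hv ((Submodule.mem_bot ℂ).1 (h ▸ hvU))

lemma IsSimple.eq_bot_of_ne_top (hs : ρ.IsSimple) {U : Submodule ℂ B} (hU : ρ.IsInvariant U)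
    (hU' : U ≠ ⊤) : U = ⊥ :=
  (hs.2 U hU).resolve_right hU'

variable (ρ)

def annFrom (s : ℕ) : Submodule ℂ B where
  carrier := {w | ∀ i : ℕ, s ≤ i → ρ.d i w = 0}
  add_mem' hv hw i hi := by simp [hv i hi, hw i hi]
  zero_mem' _ _ := map_zero _
  smul_mem' c w hw i hi := by simp [hw i hi]

variable {ρ}

lemma mem_annFrom {s : ℕ} {w : B} : w ∈ ρ.annFrom s ↔ ∀ i : ℕ, s ≤ i → ρ.d i w = 0 := Iff.rfl

lemma mem_annFrom_iff_succ {s : ℕ} {w : B} :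
    w ∈ ρ.annFrom s ↔ ρ.d s w = 0 ∧ w ∈ ρ.annFrom (s + 1) := by
  simp only [mem_annFrom]
  refine ⟨fun h => ⟨h s le_rfl, fun i hi => h i (by omega)⟩, fun ⟨h₀, h⟩ i hi => ?_⟩
  rcases hi.eq_or_lt with rfl | hlt
  exacts [h₀, h i hlt]

lemma annFrom_eq_top_iff {s : ℕ} : ρ.annFrom s = ⊤ ↔ ∀ i : ℕ, s ≤ i → ρ.d i = 0 := by
  simp only [Submodule.eq_top_iff', mem_annFrom, LinearMap.ext_iff, LinearMap.zero_apply]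
  exact ⟨fun h i hi w => h w i hi, fun h w i hi => h i hi w⟩

variable (ρ)

lemma isInvariant_annFrom (s : ℕ) : ρ.IsInvariant (ρ.annFrom s) := by
  intro j u hu i hi
  have h := ρ.comm_apply j i u
  rwa [hu i hi, map_zero, hu (j + i) (by omega), smul_zero, zero_sub, neg_eq_zero] at h

variable {ρ}

section TopDegree

variable {r : ℕ} (hvanish : ∀ i : ℕ, r < i → ρ.d i = 0)
include hvanish

lemma ker_eq_annFrom : LinearMap.ker (ρ.d r) = ρ.annFrom r := by
  ext w
  rw [LinearMap.mem_ker, mem_annFrom_iff_succ, iff_self_and]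
  exact fun _ i hi => by rw [hvanish i hi, LinearMap.zero_apply]

lemma isInvariant_range : ρ.IsInvariant (LinearMap.range (ρ.d r)) := by
  rintro (_ | j) _ ⟨w, rfl⟩
  · refine ⟨ρ.d 0 w + (r : ℂ) • w, ?_⟩
    have h := ρ.comm_apply 0 r w
    rw [Nat.cast_zero, sub_zero, zero_add, sub_eq_iff_eq_add] at h
    rw [map_add, map_smul, h, add_comm]
  · refine ⟨ρ.d (j + 1) w, ?_⟩
    have h := ρ.comm_apply (j + 1) r w
    rw [hvanish (j + 1 + r) (by omega), LinearMap.zero_apply, smul_zero, sub_eq_zero] at h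
    exact h.symm

end TopDegree

end BRep

theorem stmt1_general {B : Type*} [AddCommGroup B] [Module ℂ B] (ρ : BRep B)
    (hs : ρ.IsSimple) (hnt : ¬ ρ.IsTrivial)
    (r : ℕ) (hr : ∃ v : B, v ≠ 0 ∧ IsLeast (ρ.ordSet v) r) :
    Function.Bijective (ρ.d r) := by
  obtain ⟨v, hv, hvr, hmin⟩ := hr
  have hvanish : ∀ i : ℕ, r < i → ρ.d i = 0 :=
    BRep.annFrom_eq_top_iff.1 (hs.eq_top_of_mem (ρ.isInvariant_annFrom _) hv hvr)
  have hbot : ρ.annFrom r = ⊥ := by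
    refine hs.eq_bot_of_ne_top (ρ.isInvariant_annFrom r) fun htop => ?_
    have hall := BRep.annFrom_eq_top_iff.1 htop
    cases r with
    | zero => exact hnt fun i => hall i i.zero_le
    | succ k => exact absurd (hmin fun i hi => by rw [hall i hi, LinearMap.zero_apply]) (by omega)
  have hdv : ρ.d r v ≠ 0 := fun h =>
    hv ((Submodule.mem_bot ℂ).1 (hbot ▸ BRep.mem_annFrom_iff_succ.2 ⟨h, hvr⟩))
  exact ⟨LinearMap.ker_eq_bot.1 ((BRep.ker_eq_annFrom hvanish).trans hbot),
    LinearMap.range_eq_top.1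
      (hs.eq_top_of_mem (BRep.isInvariant_range hvanish) hdv (LinearMap.mem_range_self _ v))⟩

theorem stmt1 {B : Type*} [AddCommGroup B] [Module ℂ B] (ρ : BRep B)
    (hO : ρ.InO) (hs : ρ.IsSimple) (hnt : ¬ ρ.IsTrivial)
    (r : ℕ) (hr : ∃ v : B, v ≠ 0 ∧ IsLeast (ρ.ordSet v) r) :
    Function.Bijective (ρ.d r) :=
  stmt1_general ρ hs hnt r hr
end

section
/- Let B be a nontrivial simple 𝔟-module lying in the category O_𝔟. Then the induced 𝔚-module Ind_𝔟^𝔚(B) = U(𝔚) ⊗_{U(𝔟)} B is a simple 𝔚-module lying in the category O_𝔚. -/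
section Stmt2Aux

variable {B M : Type*} [AddCommGroup B] [Module ℂ B] [AddCommGroup M] [Module ℂ M]

/-- `b ↦ d_{-1}^k (ι b)`. -/
noncomputable def ikMap (ρM : WittRep M) (ι : B →ₗ[ℂ] M) (k : ℕ) : B →ₗ[ℂ] M :=
  ((ρM.d (-1)) ^ k) ∘ₗ ι

/-- The PBW-type map. -/
noncomputable def Fmap (ρM : WittRep M) (ι : B →ₗ[ℂ] M) : (ℕ →₀ B) →ₗ[ℂ] M :=
  Finsupp.lsum ℂ fun k : ℕ => ((ρM.d (-1)) ^ k) ∘ₗ ι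

variable (ρB : BRep B) (ρM : WittRep M) (ι : B →ₗ[ℂ] M)

lemma wcomm (m n : ℤ) (hm : -1 ≤ m) (hn : -1 ≤ n) (x : M) :
    ρM.d m (ρM.d n x) - ρM.d n (ρM.d m x) = (((n - m : ℤ) : ℂ)) • ρM.d (m + n) x := by
  have h := LinearMap.congr_fun (ρM.comm m n hm hn) x
  simpa using h

lemma bcomm (m n : ℕ) (x : B) :
    ρB.d m (ρB.d n x) - ρB.d n (ρB.d m x) = (((n : ℂ) - (m : ℂ))) • ρB.d (m + n) x := by
  have h := LinearMap.congr_fun (ρB.comm m n) x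
  simpa using h

lemma ik_zero (b : B) : ikMap ρM ι 0 b = ι b := by simp [ikMap]

lemma ik_succ (k : ℕ) (b : B) :
    ikMap ρM ι (k + 1) b = ρM.d (-1) (ikMap ρM ι k b) := by
  simp only [ikMap, LinearMap.comp_apply, pow_succ', Module.End.mul_apply]

/-- basic commutation: `d_i ∘ d_{-1} = d_{-1} ∘ d_i - (i+1) d_{i-1}` for `i ≥ 0`. -/
lemma dstep (i : ℤ) (hi : 0 ≤ i) (x : M) :
    ρM.d i (ρM.d (-1) x) = ρM.d (-1) (ρM.d i x) - ((i : ℂ) + 1) • ρM.d (i - 1) x := by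
  have h := wcomm ρM (-1) i (by norm_num) (by omega) x
  have h2 : (-1 : ℤ) + i = i - 1 := by ring
  rw [h2] at h
  have : ((i - (-1) : ℤ) : ℂ) = (i : ℂ) + 1 := by push_cast; ring
  rw [this] at h
  exact eq_sub_of_add_eq (by rw [← h]; abel)

section WithFree

variable (hfree : Function.Bijective ⇑(Fmap ρM ι))

/-- Linear equivalence `ℕ →₀ B ≃ M`. -/
noncomputable def eEquiv : (ℕ →₀ B) ≃ₗ[ℂ] M := LinearEquiv.ofBijective _ hfree

lemma e_apply (f : ℕ →₀ B) : eEquiv ρM ι hfree f = f.sum fun k b => ikMap ρM ι k b := by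
  simp only [eEquiv, LinearEquiv.ofBijective_apply, Fmap, Finsupp.lsum_apply]
  rfl

lemma e_single (k : ℕ) (b : B) :
    eEquiv ρM ι hfree (Finsupp.single k b) = ikMap ρM ι k b := by
  rw [e_apply, Finsupp.sum_single_index]
  simp [ikMap]

lemma esymm_ik (k : ℕ) (b : B) :
    (eEquiv ρM ι hfree).symm (ikMap ρM ι k b) = Finsupp.single k b := by
  rw [← e_single ρM ι hfree k b, LinearEquiv.symm_apply_apply]

/-- coordinate functional -/
noncomputable def coordL (q : ℕ) : M →ₗ[ℂ] B :=
  Finsupp.lapply q ∘ₗ (eEquiv ρM ι hfree).symm.toLinearMap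

lemma coord_apply (q : ℕ) (w : M) :
    (eEquiv ρM ι hfree).symm w q = coordL ρM ι hfree q w := rfl

lemma coord_ik (q k : ℕ) (b : B) :
    coordL ρM ι hfree q (ikMap ρM ι k b) = if k = q then b else 0 := by
  simp [coordL, esymm_ik, Finsupp.single_apply]

end WithFree

/-- `M_{≤ n}` -/
noncomputable def Mle (n : ℕ) : Submodule ℂ M :=
  Submodule.span ℂ {x | ∃ j, j ≤ n ∧ ∃ c, x = ikMap ρM ι j c}

lemma ik_mem_Mle {j n : ℕ} (h : j ≤ n) (c : B) : ikMap ρM ι j c ∈ Mle ρM ι n :=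
  Submodule.subset_span ⟨j, h, c, rfl⟩

lemma Mle_mono {n n' : ℕ} (h : n ≤ n') : Mle ρM ι n ≤ Mle (M := M) ρM ι n' :=
  Submodule.span_mono (fun x ⟨j, hj, c, hc⟩ => ⟨j, hj.trans h, c, hc⟩)

lemma coord_Mle (hfree : Function.Bijective ⇑(Fmap ρM ι)) {q n : ℕ} (hn : n < q)
    {x : M} (hx : x ∈ Mle ρM ι n) : coordL ρM ι hfree q x = 0 := by
  have : Mle ρM ι n ≤ LinearMap.ker (coordL ρM ι hfree q) := by
    rw [Mle, Submodule.span_le]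
    rintro y ⟨j, hj, c, rfl⟩
    have hjq : j ≠ q := by omega
    simp [LinearMap.mem_ker, coord_ik, hjq]
  simpa [LinearMap.mem_ker] using this hx

lemma delta_Mle {n : ℕ} {x : M} (hx : x ∈ Mle ρM ι n) :
    ρM.d (-1) x ∈ Mle ρM ι (n + 1) := by
  have : Mle ρM ι n ≤ (Mle ρM ι (n + 1)).comap (ρM.d (-1)) := by
    rw [Mle, Submodule.span_le]
    rintro y ⟨j, hj, c, rfl⟩
    simpa [← ik_succ] using ik_mem_Mle ρM ι (by omega : j + 1 ≤ n + 1) c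
  exact this hx

section ELemmas

variable (hcompat : ∀ (i : ℕ) (w : B), ι (ρB.d i w) = ρM.d (i : ℤ) (ι w))
include hcompat

lemma Lzero' (i : ℕ) (b : B) : ρM.d (i : ℤ) (ikMap ρM ι 0 b) = ikMap ρM ι 0 (ρB.d i b) := by
  rw [ik_zero, ik_zero, hcompat]

lemma Lz0 (b : B) : ρM.d 0 (ikMap ρM ι 0 b) = ikMap ρM ι 0 (ρB.d 0 b) := by
  have := Lzero' ρB ρM ι hcompat 0 b; norm_num at this; exact this

lemma Lz1 (b : B) : ρM.d 1 (ikMap ρM ι 0 b) = ikMap ρM ι 0 (ρB.d 1 b) := by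
  have := Lzero' ρB ρM ι hcompat 1 b; norm_num at this; exact this

lemma Lz2 (b : B) : ρM.d 2 (ikMap ρM ι 0 b) = ikMap ρM ι 0 (ρB.d 2 b) := by
  have := Lzero' ρB ρM ι hcompat 2 b; norm_num at this; exact this

lemma Dmem (k : ℕ) : ∀ (i : ℕ) (b : B), ρM.d (i : ℤ) (ikMap ρM ι k b) ∈ Mle ρM ι k := by
  induction k with
  | zero => intro i b; rw [Lzero' ρB ρM ι hcompat]; exact ik_mem_Mle ρM ι le_rfl _
  | succ k IH =>
    intro i b
    rw [ik_succ, dstep ρM (i : ℤ) (by positivity)]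
    refine sub_mem (delta_Mle ρM ι (IH i b)) (Submodule.smul_mem _ _ ?_)
    cases i with
    | zero =>
      rw [show ((0:ℕ):ℤ) - 1 = -1 by norm_num]
      simpa [← ik_succ] using ik_mem_Mle ρM ι (le_refl (k+1)) b
    | succ j =>
      rw [show (((j+1:ℕ)):ℤ) - 1 = ((j:ℕ):ℤ) by push_cast; ring]
      exact Mle_mono ρM ι (by omega) (IH j b)

lemma L0 (k : ℕ) (b : B) :
    ρM.d 0 (ikMap ρM ι k b) = ikMap ρM ι k (ρB.d 0 b) - (k : ℂ) • ikMap ρM ι k b := by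
  induction k with
  | zero => simpa using Lz0 ρB ρM ι hcompat b
  | succ k IH =>
    rw [ik_succ, dstep ρM 0 le_rfl, show (0:ℤ) - 1 = -1 by norm_num, IH]
    simp only [map_add, map_sub, map_smul, ← ik_succ ρM ι]
    push_cast
    module

lemma L1succ (k : ℕ) (b : B) :
    ρM.d 1 (ikMap ρM ι (k+1) b) = ikMap ρM ι (k+1) (ρB.d 1 b)
      - (2 * ((k : ℂ) + 1)) • ikMap ρM ι k (ρB.d 0 b)
      + (((k : ℂ) + 1) * (k : ℂ)) • ikMap ρM ι k b := by
  induction k with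
  | zero =>
    rw [ik_succ, dstep ρM 1 (by norm_num), show (1:ℤ) - 1 = 0 by norm_num,
      Lz1 ρB ρM ι hcompat, Lz0 ρB ρM ι hcompat, ← ik_succ]
    push_cast
    module
  | succ k IH =>
    rw [ik_succ ρM ι (k+1), dstep ρM 1 (by norm_num), show (1:ℤ) - 1 = 0 by norm_num,
      IH, L0 ρB ρM ι hcompat (k+1)]
    simp only [map_add, map_sub, map_smul, ← ik_succ ρM ι]
    push_cast
    module

lemma L2one (b : B) : ρM.d 2 (ikMap ρM ι 1 b)
    = ikMap ρM ι 1 (ρB.d 2 b) - (3 : ℂ) • ikMap ρM ι 0 (ρB.d 1 b) := by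
  rw [ik_succ, dstep ρM 2 (by norm_num), show (2:ℤ) - 1 = 1 by norm_num,
    Lz2 ρB ρM ι hcompat, Lz1 ρB ρM ι hcompat, ← ik_succ]
  push_cast
  module

lemma L2succ (k : ℕ) (b : B) :
    ρM.d 2 (ikMap ρM ι (k+2) b) = ikMap ρM ι (k+2) (ρB.d 2 b)
      - (3 * ((k : ℂ) + 2)) • ikMap ρM ι (k+1) (ρB.d 1 b)
      + (3 * ((k : ℂ) + 2) * ((k : ℂ) + 1)) • ikMap ρM ι k (ρB.d 0 b)
      - (((k : ℂ) + 2) * ((k : ℂ) + 1) * (k : ℂ)) • ikMap ρM ι k b := by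
  induction k with
  | zero =>
    rw [ik_succ ρM ι 1, dstep ρM 2 (by norm_num), show (2:ℤ) - 1 = 1 by norm_num,
      L2one ρB ρM ι hcompat, L1succ ρB ρM ι hcompat 0]
    simp only [map_add, map_sub, map_smul, ← ik_succ ρM ι]
    push_cast
    module
  | succ k IH =>
    rw [ik_succ ρM ι (k+2), dstep ρM 2 (by norm_num), show (2:ℤ) - 1 = 1 by norm_num,
      IH, L1succ ρB ρM ι hcompat (k+1)]
    simp only [map_add, map_sub, map_smul, ← ik_succ ρM ι]
    push_cast
    module

lemma Lgone (i : ℕ) (hi : 1 ≤ i) (b : B) :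
    ρM.d (i : ℤ) (ikMap ρM ι 1 b)
      = ikMap ρM ι 1 (ρB.d i b) - ((i : ℂ) + 1) • ikMap ρM ι 0 (ρB.d (i-1) b) := by
  rw [ik_succ, dstep ρM (i : ℤ) (by positivity),
    show ((i:ℕ):ℤ) - 1 = ((i-1:ℕ):ℤ) by omega,
    Lzero' ρB ρM ι hcompat, Lzero' ρB ρM ι hcompat]
  simp only [map_add, map_sub, map_smul, ← ik_succ ρM ι, Int.cast_natCast, zero_add]

lemma Lgp (i : ℕ) (hi : 1 ≤ i) (k : ℕ) (b : B) :
    ρM.d (i : ℤ) (ikMap ρM ι (k+1) b) - ikMap ρM ι (k+1) (ρB.d i b) ∈ Mle ρM ι k := by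
  induction k with
  | zero =>
    rw [Lgone ρB ρM ι hcompat i hi b]
    have key : ikMap ρM ι 1 (ρB.d i b) - ((i : ℂ) + 1) • ikMap ρM ι 0 (ρB.d (i-1) b)
        - ikMap ρM ι 1 (ρB.d i b) = (-((i : ℂ) + 1)) • ikMap ρM ι 0 (ρB.d (i-1) b) := by
      module
    rw [key]
    exact Submodule.smul_mem _ _ (ik_mem_Mle ρM ι le_rfl _)
  | succ k IH =>
    have h2 : ρM.d (((i-1:ℕ)):ℤ) (ikMap ρM ι (k+1) b) ∈ Mle ρM ι (k+1) :=
      Dmem ρB ρM ι hcompat (k+1) (i-1) b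
    have key : ρM.d (i : ℤ) (ikMap ρM ι (k+1+1) b) - ikMap ρM ι (k+1+1) (ρB.d i b)
        = ρM.d (-1) (ρM.d (i : ℤ) (ikMap ρM ι (k+1) b) - ikMap ρM ι (k+1) (ρB.d i b))
          - ((i : ℂ) + 1) • ρM.d (((i-1:ℕ)):ℤ) (ikMap ρM ι (k+1) b) := by
      rw [ik_succ ρM ι (k+1), dstep ρM (i : ℤ) (by positivity),
        show ((i:ℕ):ℤ) - 1 = ((i-1:ℕ):ℤ) by omega]
      simp only [map_add, map_sub, map_smul, ← ik_succ ρM ι]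
      module
    rw [key]
    exact Submodule.sub_mem _ (delta_Mle ρM ι (IH)) (Submodule.smul_mem _ _ h2)

lemma Lgsucc (i : ℕ) (hi : 2 ≤ i) (k : ℕ) (b : B) :
    ρM.d (i : ℤ) (ikMap ρM ι (k+2) b) - ikMap ρM ι (k+2) (ρB.d i b)
      + (((k : ℂ) + 2) * ((i : ℂ) + 1)) • ikMap ρM ι (k+1) (ρB.d (i-1) b) ∈ Mle ρM ι k := by
  induction k with
  | zero =>
    have key : ρM.d (i : ℤ) (ikMap ρM ι (0+2) b) - ikMap ρM ι (0+2) (ρB.d i b)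
        + ((((0:ℕ) : ℂ) + 2) * ((i : ℂ) + 1)) • ikMap ρM ι (0+1) (ρB.d (i-1) b)
        = (((i : ℂ) + 1) * (((i-1:ℕ) : ℂ) + 1)) • ikMap ρM ι 0 (ρB.d (i-1-1) b) := by
      rw [show (0+2 : ℕ) = 1+1 from rfl, ik_succ ρM ι 1, dstep ρM (i : ℤ) (by positivity),
        show ((i:ℕ):ℤ) - 1 = ((i-1:ℕ):ℤ) by omega,
        Lgone ρB ρM ι hcompat i (by omega), Lgone ρB ρM ι hcompat (i-1) (by omega)]
      simp only [map_add, map_sub, map_smul, ← ik_succ ρM ι]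
      push_cast
      module
    rw [key]
    exact Submodule.smul_mem _ _ (ik_mem_Mle ρM ι le_rfl _)
  | succ k IH =>
    have hr' := Lgp ρB ρM ι hcompat (i-1) (by omega) (k+1) b
    have key : ρM.d (i : ℤ) (ikMap ρM ι (k+1+2) b) - ikMap ρM ι (k+1+2) (ρB.d i b)
        + (((((k+1:ℕ)) : ℂ) + 2) * ((i : ℂ) + 1)) • ikMap ρM ι (k+1+1) (ρB.d (i-1) b)
        = ρM.d (-1) (ρM.d (i : ℤ) (ikMap ρM ι (k+2) b) - ikMap ρM ι (k+2) (ρB.d i b)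
            + (((k : ℂ) + 2) * ((i : ℂ) + 1)) • ikMap ρM ι (k+1) (ρB.d (i-1) b))
          - ((i : ℂ) + 1) • (ρM.d (((i-1:ℕ)):ℤ) (ikMap ρM ι (k+1+1) b)
              - ikMap ρM ι (k+1+1) (ρB.d (i-1) b)) := by
      rw [show (k+1+2 : ℕ) = (k+2)+1 from rfl, ik_succ ρM ι (k+2), dstep ρM (i : ℤ) (by positivity),
        show ((i:ℕ):ℤ) - 1 = ((i-1:ℕ):ℤ) by omega]
      simp only [map_add, map_sub, map_smul, ← ik_succ ρM ι]
      push_cast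
      module
    rw [key]
    exact Submodule.sub_mem _ (delta_Mle ρM ι IH) (Submodule.smul_mem _ _ hr')

end ELemmas


section Extract

variable (hcompat : ∀ (i : ℕ) (w : B), ι (ρB.d i w) = ρM.d (i : ℤ) (ι w))
variable (hfree : Function.Bijective ⇑(Fmap ρM ι))

lemma fsum_if (f : ℕ →₀ B) (a : ℕ) (g : B → B) (hg : g 0 = 0) :
    (∑ k ∈ f.support, if k = a then g (f k) else 0) = g (f a) := by
  classical
  rw [Finset.sum_ite_eq' f.support a (fun k => g (f k))]
  by_cases h : a ∈ f.support
  · rw [if_pos h]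
  · rw [if_neg h, Finsupp.notMem_support_iff.mp h, hg]

include hcompat

lemma ext_expand (q : ℕ) (i : ℤ) (f : ℕ →₀ B) :
    coordL ρM ι hfree q (ρM.d i (eEquiv ρM ι hfree f))
      = f.sum fun k b => coordL ρM ι hfree q (ρM.d i (ikMap ρM ι k b)) := by
  rw [e_apply, Finsupp.sum, map_sum, map_sum]
  rfl

lemma ext_high (p : ℕ) (f : ℕ →₀ B) (hf : ∀ k, p < k → f k = 0) (q : ℕ) (hq : p < q) (i : ℕ) :
    coordL ρM ι hfree q (ρM.d (i : ℤ) (eEquiv ρM ι hfree f)) = 0 := by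
  rw [ext_expand ρB ρM ι hcompat hfree, Finsupp.sum]
  apply Finset.sum_eq_zero
  intro k hk
  have hkp : k ≤ p := by
    by_contra h
    exact absurd (hf k (by omega)) (Finsupp.mem_support_iff.mp hk)
  exact coord_Mle ρM ι hfree (by omega) (Dmem ρB ρM ι hcompat k i (f k))

lemma ext_top (p : ℕ) (hp : 1 ≤ p) (f : ℕ →₀ B) (hf : ∀ k, p < k → f k = 0)
    (i : ℕ) (hi : 1 ≤ i) :
    coordL ρM ι hfree p (ρM.d (i : ℤ) (eEquiv ρM ι hfree f)) = ρB.d i (f p) := by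
  rw [ext_expand ρB ρM ι hcompat hfree]
  have claim : ∀ k ∈ f.support, coordL ρM ι hfree p (ρM.d (i : ℤ) (ikMap ρM ι k (f k)))
      = if k = p then ρB.d i (f k) else 0 := by
    intro k hk
    match k with
    | 0 =>
      rw [Lzero' ρB ρM ι hcompat, coord_ik]
    | (k+1) =>
      have hkp : k + 1 ≤ p := by
        by_contra h
        exact absurd (hf _ (by omega)) (Finsupp.mem_support_iff.mp hk)
      have hsplit : ρM.d (i : ℤ) (ikMap ρM ι (k+1) (f (k+1)))
          = ikMap ρM ι (k+1) (ρB.d i (f (k+1)))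
            + (ρM.d (i : ℤ) (ikMap ρM ι (k+1) (f (k+1)))
                - ikMap ρM ι (k+1) (ρB.d i (f (k+1)))) := by abel
      rw [hsplit, map_add, coord_ik,
        coord_Mle ρM ι hfree (show k < p by omega) (Lgp ρB ρM ι hcompat i hi k _), add_zero]
  rw [Finsupp.sum, Finset.sum_congr rfl claim, fsum_if f p _ (map_zero _)]

lemma ext_sub1 (p i : ℕ) (hp : 1 ≤ p) (hi : 2 ≤ i) (f : ℕ →₀ B) (hf : ∀ k, p < k → f k = 0) :
    coordL ρM ι hfree (p-1) (ρM.d (i : ℤ) (eEquiv ρM ι hfree f))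
      = ρB.d i (f (p-1)) - ((p : ℂ) * ((i : ℂ) + 1)) • ρB.d (i-1) (f p) := by
  rw [ext_expand ρB ρM ι hcompat hfree]
  have claim : ∀ k ∈ f.support, coordL ρM ι hfree (p-1) (ρM.d (i : ℤ) (ikMap ρM ι k (f k)))
      = (if k = p-1 then ρB.d i (f k) else 0)
        - (if k = p then ((p : ℂ) * ((i : ℂ) + 1)) • ρB.d (i-1) (f k) else 0) := by
    intro k hk
    have hkp : k ≤ p := by
      by_contra h
      exact absurd (hf k (by omega)) (Finsupp.mem_support_iff.mp hk)
    match k, hkp with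
    | 0, _ =>
      rw [Lzero' ρB ρM ι hcompat, coord_ik]
      simp [show (0:ℕ) ≠ p by omega]
    | 1, hkp =>
      rw [Lgone ρB ρM ι hcompat i (by omega), map_sub, map_smul, coord_ik, coord_ik]
      by_cases h1 : p = 1
      · subst h1
        norm_num
      · simp [show ¬ ((0:ℕ) = p-1) by omega, show (1:ℕ) ≠ p by omega]
    | (k+2), hkp =>
      have hsplit : ρM.d (i : ℤ) (ikMap ρM ι (k+2) (f (k+2)))
          = ikMap ρM ι (k+2) (ρB.d i (f (k+2)))
            - (((k : ℂ) + 2) * ((i : ℂ) + 1)) • ikMap ρM ι (k+1) (ρB.d (i-1) (f (k+2)))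
            + (ρM.d (i : ℤ) (ikMap ρM ι (k+2) (f (k+2)))
                - ikMap ρM ι (k+2) (ρB.d i (f (k+2)))
                + (((k : ℂ) + 2) * ((i : ℂ) + 1)) • ikMap ρM ι (k+1) (ρB.d (i-1) (f (k+2)))) := by
        abel
      rw [hsplit, map_add, map_sub, map_smul, coord_ik, coord_ik,
        coord_Mle ρM ι hfree (show k < p-1 by omega) (Lgsucc ρB ρM ι hcompat i hi k _), add_zero]
      by_cases h2 : k+2 = p
      · have h2' : k+1 = p-1 := by omega
        have h2'' : ¬ (k+2 = p-1) := by omega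
        have hc : ((k:ℂ)+2) = (p:ℂ) := by exact_mod_cast h2
        rw [if_pos h2', if_neg h2'', if_pos h2, hc]
      · have h2' : ¬ (k+1 = p-1) := by omega
        rw [if_neg h2', if_neg h2]
        simp
  rw [Finsupp.sum, Finset.sum_congr rfl claim, Finset.sum_sub_distrib,
    fsum_if f (p-1) _ (map_zero _),
    fsum_if f p (fun b => ((p : ℂ) * ((i : ℂ) + 1)) • ρB.d (i-1) b) (by simp)]

lemma ext_sub2 (p : ℕ) (hp : 2 ≤ p) (f : ℕ →₀ B) (hf : ∀ k, p < k → f k = 0) :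
    coordL ρM ι hfree (p-2) (ρM.d 2 (eEquiv ρM ι hfree f))
      = ρB.d 2 (f (p-2)) - (3*((p:ℂ)-1)) • ρB.d 1 (f (p-1))
        + ((3*(p:ℂ)*((p:ℂ)-1)) • ρB.d 0 (f p) - ((p:ℂ)*((p:ℂ)-1)*((p:ℂ)-2)) • f p) := by
  rw [ext_expand ρB ρM ι hcompat hfree]
  have claim : ∀ k ∈ f.support, coordL ρM ι hfree (p-2) (ρM.d 2 (ikMap ρM ι k (f k)))
      = (if k = p-2 then ρB.d 2 (f k) else 0)
        - (if k = p-1 then (3*((p:ℂ)-1)) • ρB.d 1 (f k) else 0)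
        + (if k = p then ((3*(p:ℂ)*((p:ℂ)-1)) • ρB.d 0 (f k)
            - ((p:ℂ)*((p:ℂ)-1)*((p:ℂ)-2)) • f k) else 0) := by
    intro k hk
    have hkp : k ≤ p := by
      by_contra h
      exact absurd (hf k (by omega)) (Finsupp.mem_support_iff.mp hk)
    match k, hkp with
    | 0, _ =>
      rw [Lz2 ρB ρM ι hcompat, coord_ik]
      simp [show (0:ℕ) ≠ p-1 by omega, show (0:ℕ) ≠ p by omega]
    | 1, hkp =>
      rw [L2one ρB ρM ι hcompat, map_sub, map_smul, coord_ik, coord_ik]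
      by_cases h2 : p = 2
      · subst h2
        norm_num
      · simp [show ¬ ((0:ℕ) = p-2) by omega, show (1:ℕ) ≠ p-1 by omega,
          show (1:ℕ) ≠ p by omega]
    | (k+2), hkp =>
      rw [L2succ ρB ρM ι hcompat, map_sub, map_add, map_sub, map_smul, map_smul, map_smul,
        coord_ik, coord_ik, coord_ik, coord_ik]
      by_cases h2 : k+2 = p
      · have e1 : ¬ (k+2 = p-2) := by omega
        have e2 : ¬ (k+1 = p-2) := by omega
        have e3 : k = p-2 := by omega
        have hc : (k:ℂ) = (p:ℂ) - 2 := by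
          have : ((k+2:ℕ):ℂ) = (p:ℂ) := by exact_mod_cast h2
          push_cast at this
          linear_combination this
        simp only [if_neg e1, if_neg e2, if_pos e3, if_pos h2,
          if_neg (show ¬ (k+2 = p-1) by omega)]
        rw [hc]
        module
      · by_cases h1 : k+2 = p-1
        · have e1 : ¬ (k+2 = p-2) := by omega
          have e2 : k+1 = p-2 := by omega
          have e3 : ¬ (k = p-2) := by omega
          have hc : (k:ℂ) = (p:ℂ) - 3 := by
            have : ((k+3:ℕ):ℂ) = (p:ℂ) := by exact_mod_cast (show k+3 = p by omega)
            push_cast at this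
            linear_combination this
          simp only [if_neg e1, if_pos e2, if_neg e3, if_pos h1, if_neg h2]
          rw [hc]
          module
        · have e2 : ¬ (k+1 = p-2) := by omega
          have e3 : ¬ (k = p-2) := by omega
          simp only [if_neg e2, if_neg e3, if_neg h1, if_neg h2]
          simp
  rw [Finsupp.sum, Finset.sum_congr rfl claim, Finset.sum_add_distrib, Finset.sum_sub_distrib,
    fsum_if f (p-2) _ (map_zero _),
    fsum_if f (p-1) (fun b => (3*((p:ℂ)-1)) • ρB.d 1 b) (by simp),
    fsum_if f p (fun b => (3*(p:ℂ)*((p:ℂ)-1)) • ρB.d 0 b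
      - ((p:ℂ)*((p:ℂ)-1)*((p:ℂ)-2)) • b) (by simp)]

lemma ext_sub1_one (p : ℕ) (hp : 1 ≤ p) (f : ℕ →₀ B) (hf : ∀ k, p < k → f k = 0) :
    coordL ρM ι hfree (p-1) (ρM.d 1 (eEquiv ρM ι hfree f))
      = ρB.d 1 (f (p-1)) + ((-(2*(p:ℂ))) • ρB.d 0 (f p) + ((p:ℂ)*((p:ℂ)-1)) • f p) := by
  rw [ext_expand ρB ρM ι hcompat hfree]
  have claim : ∀ k ∈ f.support, coordL ρM ι hfree (p-1) (ρM.d 1 (ikMap ρM ι k (f k)))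
      = (if k = p-1 then ρB.d 1 (f k) else 0)
        + (if k = p then ((-(2*(p:ℂ))) • ρB.d 0 (f k) + ((p:ℂ)*((p:ℂ)-1)) • f k) else 0) := by
    intro k hk
    have hkp : k ≤ p := by
      by_contra h
      exact absurd (hf k (by omega)) (Finsupp.mem_support_iff.mp hk)
    match k, hkp with
    | 0, _ =>
      rw [Lz1 ρB ρM ι hcompat, coord_ik]
      simp [show (0:ℕ) ≠ p by omega]
    | (k+1), hkp =>
      rw [L1succ ρB ρM ι hcompat, map_add, map_sub, map_smul, map_smul,
        coord_ik, coord_ik, coord_ik]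
      by_cases h2 : k+1 = p
      · have e1 : ¬ (k+1 = p-1) := by omega
        have e2 : k = p-1 := by omega
        have hc : (k:ℂ) = (p:ℂ) - 1 := by
          have : ((k+1:ℕ):ℂ) = (p:ℂ) := by exact_mod_cast h2
          push_cast at this
          linear_combination this
        simp only [if_neg e1, if_pos e2, if_pos h2]
        rw [hc]
        module
      · by_cases h1 : k+1 = p-1
        · have e2 : ¬ (k = p-1) := by omega
          simp only [if_pos h1, if_neg e2, if_neg h2]
          simp
        · have e2 : ¬ (k = p-1) := by omega
          simp only [if_neg h1, if_neg e2, if_neg h2]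
          simp
  rw [Finsupp.sum, Finset.sum_congr rfl claim, Finset.sum_add_distrib,
    fsum_if f (p-1) _ (map_zero _),
    fsum_if f p (fun b => (-(2*(p:ℂ))) • ρB.d 0 b + ((p:ℂ)*((p:ℂ)-1)) • b) (by simp)]

lemma vanish (n : ℕ) (b : B) (hb : ∀ j : ℕ, n ≤ j → ρB.d j b = 0) :
    ∀ (k i : ℕ), n + k ≤ i → ρM.d (i : ℤ) (ikMap ρM ι k b) = 0 := by
  intro k
  induction k with
  | zero =>
    intro i hi
    rw [Lzero' ρB ρM ι hcompat, hb i (by omega), map_zero]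
  | succ k IH =>
    intro i hi
    rw [ik_succ, dstep ρM (i:ℤ) (by positivity),
      show ((i:ℕ):ℤ) - 1 = ((i-1:ℕ):ℤ) by omega,
      IH i (by omega), IH (i-1) (by omega), map_zero, smul_zero, sub_zero]

end Extract

/-- The submodule of vectors killed by all `d_j`, `j ≥ m`. -/
def annAbove (ρB : BRep B) (m : ℕ) : Submodule ℂ B where
  carrier := {x | ∀ j : ℕ, m ≤ j → ρB.d j x = 0}
  add_mem' := by
    intro a b ha hb j hj
    rw [map_add, ha j hj, hb j hj, add_zero]
  zero_mem' := fun j _ => map_zero _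
  smul_mem' := by
    intro c x hx j hj
    rw [map_smul, hx j hj, smul_zero]

lemma mem_annAbove (m : ℕ) (x : B) :
    x ∈ annAbove ρB m ↔ ∀ j : ℕ, m ≤ j → ρB.d j x = 0 := Iff.rfl

lemma annAbove_invariant (m : ℕ) :
    ∀ i : ℕ, ∀ u ∈ annAbove ρB m, ρB.d i u ∈ annAbove ρB m := by
  intro i u hu j hj
  have h := bcomm ρB i j u
  have h1 : ρB.d j u = 0 := hu j hj
  have h2 : ρB.d (i+j) u = 0 := hu (i+j) (by omega)
  have h3 : ρB.d j (ρB.d i u)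
      = ρB.d i (ρB.d j u) - ((j:ℂ) - (i:ℂ)) • ρB.d (i+j) u := by
    rw [← h]; abel
  rw [h3, h1, h2, map_zero, smul_zero, sub_zero]

end Stmt2Aux

theorem stmt2 {B M : Type*} [AddCommGroup B] [Module ℂ B] [AddCommGroup M] [Module ℂ M]
    (ρB : BRep B) (hO : ρB.InO) (hs : ρB.IsSimple) (hnt : ¬ ρB.IsTrivial)
    (ρM : WittRep M) (ι : B →ₗ[ℂ] M)
    (hcompat : ∀ (i : ℕ) (w : B), ι (ρB.d i w) = ρM.d (i : ℤ) (ι w))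
    (hfree : Function.Bijective ⇑(Finsupp.lsum ℂ fun k : ℕ => ((ρM.d (-1)) ^ k) ∘ₗ ι)) :
    ρM.IsSimple ∧ ρM.InO := by
  classical
  have hfree' : Function.Bijective ⇑(Fmap ρM ι) := hfree
  have hInO : ρM.InO := by
    intro v
    set f := (eEquiv ρM ι hfree').symm v with hfdef
    choose nb hnb using hO
    refine ⟨f.support.sup (fun k => nb (f k) + k) + 1, ?_⟩
    intro i hi
    have hi0 : 0 ≤ i := by omega
    have hv : v = eEquiv ρM ι hfree' f := (LinearEquiv.apply_symm_apply _ v).symm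
    rw [hv, e_apply, Finsupp.sum, map_sum]
    apply Finset.sum_eq_zero
    intro k hk
    have hsup : nb (f k) + k ≤ f.support.sup (fun k => nb (f k) + k) :=
      Finset.le_sup (f := fun k => nb (f k) + k) hk
    have hcast : ρM.d i = ρM.d ((i.toNat : ℕ) : ℤ) := by rw [Int.toNat_of_nonneg hi0]
    rw [hcast]
    exact vanish ρB ρM ι hcompat (nb (f k)) (f k) (hnb (f k)) k i.toNat (by omega)
  refine ⟨⟨?_, ?_⟩, hInO⟩
  · -- existence of a nonzero vector
    obtain ⟨b0, hb0⟩ := hs.1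
    refine ⟨ι b0, fun h => hb0 ?_⟩
    have h0 : eEquiv ρM ι hfree' (Finsupp.single 0 b0) = 0 := by
      rw [e_single, ik_zero, h]
    have h1 : Finsupp.single 0 b0 = 0 := by
      apply (eEquiv ρM ι hfree').injective
      rw [h0, map_zero]
    exact (Finsupp.single_eq_zero).mp h1
  · -- simplicity
    intro U hU
    by_cases hUbot : U = ⊥
    · exact Or.inl hUbot
    right
    obtain ⟨v0, hv0U, hv0⟩ := Submodule.exists_mem_ne_zero_of_ne_bot hUbot
    have hSne : ∃ n : ℕ, ∃ v, v ∈ U ∧ v ≠ 0 ∧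
        ∀ k : ℕ, n < k → (eEquiv ρM ι hfree').symm v k = 0 := by
      refine ⟨((eEquiv ρM ι hfree').symm v0).support.sup id, v0, hv0U, hv0, ?_⟩
      intro k hk
      by_contra h
      have hmem : k ∈ ((eEquiv ρM ι hfree').symm v0).support := Finsupp.mem_support_iff.mpr h
      have := Finset.le_sup (f := id) hmem
      simp at this
      omega
    set p := Nat.find hSne with hpdef
    obtain ⟨v, hvU, hv, hsupp⟩ := Nat.find_spec hSne
    rw [← hpdef] at hsupp
    set f := (eEquiv ρM ι hfree').symm v with hfdef
    have hve : v = eEquiv ρM ι hfree' f := (LinearEquiv.apply_symm_apply _ v).symm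
    have hp0 : p = 0 := by
      by_contra hp
      have hp1 : 1 ≤ p := by omega
      have kill : ∀ w, w ∈ U → (∀ k : ℕ, p < k → (eEquiv ρM ι hfree').symm w k = 0) →
          (eEquiv ρM ι hfree').symm w p = 0 → w = 0 := by
        intro w hwU hwhigh hwp
        by_contra hw
        refine absurd ?_ (Nat.find_min hSne (show p - 1 < p by omega))
        refine ⟨w, hwU, hw, fun k hk => ?_⟩
        rcases eq_or_ne k p with rfl | hne
        · exact hwp
        · exact hwhigh k (by omega)
      have hfp : f p ≠ 0 := fun h => hv (kill v hvU hsupp h)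
      rcases hs.2 (annAbove ρB 1) (annAbove_invariant ρB 1) with hB1 | hB1
      · -- B₁ = ⊥ : every nonzero vector has order ≥ 2
        obtain ⟨n0, hn0⟩ := hO (f p)
        have hSm : ∃ m : ℕ, ∀ j, m ≤ j → ρB.d j (f p) = 0 := ⟨n0, fun j hj => hn0 j hj⟩
        set m := Nat.find hSm with hmdef
        have hmsp : ∀ j, m ≤ j → ρB.d j (f p) = 0 := Nat.find_spec hSm
        have hm2 : 2 ≤ m := by
          by_contra hcon
          have hmem : f p ∈ annAbove ρB 1 := fun j hj => hmsp j (by omega)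
          rw [hB1, Submodule.mem_bot] at hmem
          exact hfp hmem
        have hwit : ρB.d (m-1) (f p) ≠ 0 := by
          have hmin := Nat.find_min hSm (show m - 1 < m by omega)
          push_neg at hmin
          obtain ⟨j, hj1, hj2⟩ := hmin
          have hje : j = m-1 := by
            by_contra hne
            exact hj2 (hmsp j (by omega))
          rwa [hje] at hj2
        have hBm : ∀ (x : B) (j : ℕ), m ≤ j → ρB.d j x = 0 := by
          rcases hs.2 (annAbove ρB m) (annAbove_invariant ρB m) with h | h
          · exfalso
            have hmem : f p ∈ annAbove ρB m := fun j hj => hmsp j hj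
            rw [h, Submodule.mem_bot] at hmem
            exact hfp hmem
          · intro x j hj
            have hmem : x ∈ annAbove ρB m := by rw [h]; trivial
            exact hmem j hj
        have hwU2 : ρM.d ((m:ℕ):ℤ) v ∈ U := hU _ (by omega) v hvU
        have hw0 : ρM.d ((m:ℕ):ℤ) v = 0 := by
          apply kill _ hwU2
          · intro k hk
            rw [coord_apply ρM ι hfree', hve]
            exact ext_high ρB ρM ι hcompat hfree' p f hsupp k hk m
          · rw [coord_apply ρM ι hfree', hve,
              ext_top ρB ρM ι hcompat hfree' p hp1 f hsupp m (by omega)]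
            exact hmsp m le_rfl
        have hrel := ext_sub1 ρB ρM ι hcompat hfree' p m hp1 hm2 f hsupp
        rw [← hve, hw0, map_zero, hBm (f (p-1)) m le_rfl, zero_sub] at hrel
        have hX : ((p:ℂ) * ((m:ℂ)+1)) • ρB.d (m-1) (f p) = 0 := neg_eq_zero.mp hrel.symm
        have hc0 : ((p:ℂ) * ((m:ℂ)+1)) ≠ 0 := by
          refine mul_ne_zero (Nat.cast_ne_zero.mpr (by omega)) (Nat.cast_add_one_ne_zero m)
        rcases smul_eq_zero.mp hX with h' | h'
        · exact hc0 h'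
        · exact hwit h'
      · -- B₁ = ⊤ : all d_i (i ≥ 1) vanish
        have hdge : ∀ i : ℕ, 1 ≤ i → ∀ x : B, ρB.d i x = 0 := by
          intro i hi x
          have hmem : x ∈ annAbove ρB 1 := by rw [hB1]; trivial
          exact hmem i hi
        have h1U : ρM.d ((1:ℕ):ℤ) v ∈ U := hU _ (by omega) v hvU
        have h10 : ρM.d ((1:ℕ):ℤ) v = 0 := by
          apply kill _ h1U
          · intro k hk
            rw [coord_apply ρM ι hfree', hve]
            exact ext_high ρB ρM ι hcompat hfree' p f hsupp k hk 1
          · rw [coord_apply ρM ι hfree', hve,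
              ext_top ρB ρM ι hcompat hfree' p hp1 f hsupp 1 le_rfl]
            exact hdge 1 le_rfl _
        have hrel1 := ext_sub1_one ρB ρM ι hcompat hfree' p hp1 f hsupp
        rw [← hve] at hrel1
        rw [show ((1:ℕ):ℤ) = (1:ℤ) by norm_num] at h10
        rw [h10, map_zero, hdge 1 le_rfl (f (p-1)), zero_add, neg_smul] at hrel1
        have rel1 : (2*(p:ℂ)) • ρB.d 0 (f p) = ((p:ℂ)*((p:ℂ)-1)) • f p :=
          neg_add_eq_zero.mp hrel1.symm
        by_cases hpp : p = 1
        · have hd0 : ρB.d 0 (f p) = 0 := by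
            have hcz : ((p:ℂ)*((p:ℂ)-1)) = 0 := by rw [hpp]; norm_num
            have h2z : (2*(p:ℂ)) ≠ 0 := by rw [hpp]; norm_num
            rw [hcz, zero_smul] at rel1
            rcases smul_eq_zero.mp rel1 with h | h
            · exact absurd h h2z
            · exact h
          have hker : ∀ i : ℕ, ∀ u ∈ LinearMap.ker (ρB.d 0),
              ρB.d i u ∈ LinearMap.ker (ρB.d 0) := by
            intro i u hu
            rcases Nat.eq_zero_or_pos i with rfl | hi
            · rw [LinearMap.mem_ker] at *
              rw [hu, map_zero]
            · rw [LinearMap.mem_ker, hdge i hi u, map_zero]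
          rcases hs.2 _ hker with h | h
          · have hmem : f p ∈ LinearMap.ker (ρB.d 0) := hd0
            rw [h, Submodule.mem_bot] at hmem
            exact hfp hmem
          · apply hnt
            intro i
            rcases Nat.eq_zero_or_pos i with rfl | hi
            · apply LinearMap.ext
              intro x
              have hmem : x ∈ LinearMap.ker (ρB.d 0) := by rw [h]; trivial
              simpa using hmem
            · exact LinearMap.ext fun x => by simpa using hdge i hi x
        · have hp2 : 2 ≤ p := by omega
          have h2U : ρM.d ((2:ℕ):ℤ) v ∈ U := hU _ (by omega) v hvU
          have h20 : ρM.d ((2:ℕ):ℤ) v = 0 := by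
            apply kill _ h2U
            · intro k hk
              rw [coord_apply ρM ι hfree', hve]
              exact ext_high ρB ρM ι hcompat hfree' p f hsupp k hk 2
            · rw [coord_apply ρM ι hfree', hve,
                ext_top ρB ρM ι hcompat hfree' p hp1 f hsupp 2 (by omega)]
              exact hdge 2 (by omega) _
          have hrel2 := ext_sub2 ρB ρM ι hcompat hfree' p hp2 f hsupp
          rw [← hve] at hrel2
          rw [show ((2:ℕ):ℤ) = (2:ℤ) by norm_num] at h20
          rw [h20, map_zero, hdge 2 (by omega) (f (p-2)), hdge 1 le_rfl (f (p-1)),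
            smul_zero, sub_zero, zero_add] at hrel2
          have rel2 : (3*(p:ℂ)*((p:ℂ)-1)) • ρB.d 0 (f p)
              = ((p:ℂ)*((p:ℂ)-1)*((p:ℂ)-2)) • f p := sub_eq_zero.mp hrel2.symm
          have h1c : (3*((p:ℂ)-1)) • ((2*(p:ℂ)) • ρB.d 0 (f p))
              = (3*((p:ℂ)-1)) • (((p:ℂ)*((p:ℂ)-1)) • f p) := by rw [rel1]
          have h2c : (2:ℂ) • ((3*(p:ℂ)*((p:ℂ)-1)) • ρB.d 0 (f p))
              = (2:ℂ) • (((p:ℂ)*((p:ℂ)-1)*((p:ℂ)-2)) • f p) := by rw [rel2]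
          have h3 : (3*((p:ℂ)-1)) • (((p:ℂ)*((p:ℂ)-1)) • f p)
              - (2:ℂ) • (((p:ℂ)*((p:ℂ)-1)*((p:ℂ)-2)) • f p) = 0 := by
            rw [← h1c, ← h2c]
            module
          rw [smul_smul, smul_smul, ← sub_smul,
            show 3*((p:ℂ)-1) * ((p:ℂ)*((p:ℂ)-1)) - 2 * ((p:ℂ)*((p:ℂ)-1)*((p:ℂ)-2))
              = (p:ℂ)*((p:ℂ)-1)*((p:ℂ)+1) by ring] at h3
          have hc0 : (p:ℂ)*((p:ℂ)-1)*((p:ℂ)+1) ≠ 0 := by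
            have c1 : (p:ℂ) ≠ 0 := Nat.cast_ne_zero.mpr (by omega)
            have c2 : (p:ℂ) - 1 ≠ 0 := sub_ne_zero.mpr (by
              intro h
              exact hpp (by exact_mod_cast h))
            have c3 : (p:ℂ) + 1 ≠ 0 := Nat.cast_add_one_ne_zero p
            exact mul_ne_zero (mul_ne_zero c1 c2) c3
          rcases smul_eq_zero.mp h3 with h' | h'
          · exact hc0 h'
          · exact hfp h'
    -- p = 0 : U contains a nonzero vector of B
    rw [hp0] at hsupp
    have hf0 : f 0 ≠ 0 := by
      intro h
      apply hv
      have hz : f = 0 := by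
        ext k
        rcases Nat.eq_zero_or_pos k with rfl | hk
        · exact h
        · exact hsupp k hk
      rw [hve, hz, map_zero]
    have hvi : v = ι (f 0) := by
      rw [hve]
      have hz : f = Finsupp.single 0 (f 0) := by
        ext k
        rcases Nat.eq_zero_or_pos k with rfl | hk
        · simp
        · rw [hsupp k hk, Finsupp.single_eq_of_ne (by omega)]
      rw [hz, e_single, ik_zero]
      simp
    have hι0 : ι (f 0) ∈ U := hvi ▸ hvU
    have hcomap : ∀ i : ℕ, ∀ u ∈ Submodule.comap ι U, ρB.d i u ∈ Submodule.comap ι U := by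
      intro i u hu
      rw [Submodule.mem_comap] at *
      rw [hcompat]
      exact hU (i:ℤ) (by omega) _ hu
    rcases hs.2 _ hcomap with h | h
    · exfalso
      have hmem : f 0 ∈ Submodule.comap ι U := hι0
      rw [h, Submodule.mem_bot] at hmem
      exact hf0 hmem
    · have hιall : ∀ x : B, ι x ∈ U := by
        intro x
        have hmem : x ∈ Submodule.comap ι U := by rw [h]; trivial
        exact hmem
      have hikU : ∀ (k : ℕ) (x : B), ikMap ρM ι k x ∈ U := by
        intro k
        induction k with
        | zero => intro x; rw [ik_zero]; exact hιall x
        | succ k IH => intro x; rw [ik_succ]; exact hU (-1) le_rfl _ (IH x)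
      rw [eq_top_iff]
      intro w _
      have hw : w = eEquiv ρM ι hfree' ((eEquiv ρM ι hfree').symm w) :=
        (LinearEquiv.apply_symm_apply _ w).symm
      rw [hw, e_apply, Finsupp.sum]
      exact Submodule.sum_mem U fun k hk => hikU k _
end

section
/- Let W be a nontrivial simple 𝔚-module lying in the category O_𝔚. Then Soc_𝔟(W) is a simple 𝔟-module, and it is an essential 𝔟-submodule of W, i.e., it equals the intersection of all nonzero 𝔟-submodules of W (in particular it is contained in every nonzero 𝔟-submodule of W). -/
namespace Stmt3Aux

variable {W : Type*} [AddCommGroup W] [Module ℂ W]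

/-- pointwise commutator -/
theorem comm' (ρ : WittRep W) {m n : ℤ} (hm : -1 ≤ m) (hn : -1 ≤ n) (x : W) :
    ρ.d m (ρ.d n x) = ρ.d n (ρ.d m x) + ((n - m : ℤ) : ℂ) • ρ.d (m + n) x := by
  have h := LinearMap.congr_fun (ρ.comm m n hm hn) x
  simp only [LinearMap.sub_apply, LinearMap.comp_apply, LinearMap.smul_apply] at h
  have := sub_eq_iff_eq_add.mp h
  linear_combination (norm := module) this

/-- commuting past T = d₋₁ -/
theorem dT (ρ : WittRep W) {m : ℤ} (hm : 0 ≤ m) (x : W) :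
    ρ.d m (ρ.d (-1) x) = ρ.d (-1) (ρ.d m x) + ((-1 - m : ℤ) : ℂ) • ρ.d (m - 1) x := by
  have h := comm' ρ (m := m) (n := -1) (by omega) (by omega) x
  rw [h]; ring_nf

/-- K_N : killed by all d_i, i ≥ N -/
def KN (ρ : WittRep W) (N : ℕ) : Submodule ℂ W where
  carrier := {v | ∀ i : ℤ, (N : ℤ) ≤ i → ρ.d i v = 0}
  add_mem' := fun ha hb i hi => by rw [map_add, ha i hi, hb i hi, add_zero]
  zero_mem' := fun i _ => map_zero _
  smul_mem' := fun c x hx i hi => by rw [map_smul, hx i hi, smul_zero]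

theorem mem_KN {ρ : WittRep W} {N : ℕ} {v : W} :
    v ∈ KN ρ N ↔ ∀ i : ℤ, (N : ℤ) ≤ i → ρ.d i v = 0 := Iff.rfl

theorem KN_mono (ρ : WittRep W) {N M : ℕ} (h : N ≤ M) : KN ρ N ≤ KN ρ M :=
  fun _ hv i hi => hv i (le_trans (by exact_mod_cast h) hi)

theorem KN_binv (ρ : WittRep W) (N : ℕ) : ρ.BInvariant (KN ρ N) := by
  intro m hm v hv i hi
  have him : (-1:ℤ) ≤ i := by omega
  rw [comm' ρ him (by omega : (-1:ℤ) ≤ m) v, hv i hi, map_zero,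
      hv (i + m) (by omega), smul_zero, add_zero]

end Stmt3Aux

namespace Stmt3Aux

variable {W : Type*} [AddCommGroup W] [Module ℂ W]

/-- iterated d₋₁ -/
noncomputable def Tp (ρ : WittRep W) (k : ℕ) : W →ₗ[ℂ] W := (ρ.d (-1) : Module.End ℂ W) ^ k

theorem Tp_zero (ρ : WittRep W) (x : W) : Tp ρ 0 x = x := rfl

theorem Tp_succ (ρ : WittRep W) (k : ℕ) (x : W) :
    Tp ρ (k + 1) x = ρ.d (-1) (Tp ρ k x) := by
  show ((ρ.d (-1) : Module.End ℂ W) ^ (k+1)) x = _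
  rw [pow_succ']; rfl

theorem Tp_succ' (ρ : WittRep W) (k : ℕ) (x : W) :
    Tp ρ (k + 1) x = Tp ρ k (ρ.d (-1) x) := by
  show ((ρ.d (-1) : Module.End ℂ W) ^ (k+1)) x = _
  rw [pow_succ]; rfl

theorem Tp_add (ρ : WittRep W) (a b : ℕ) (x : W) :
    Tp ρ (a + b) x = Tp ρ a (Tp ρ b x) := by
  show ((ρ.d (-1) : Module.End ℂ W) ^ (a+b)) x = _
  rw [pow_add]; rfl

/-- the filtration Σ_{k ≤ n} T^k U₀ -/
noncomputable def Fn (ρ : WittRep W) (U₀ : Submodule ℂ W) : ℕ → Submodule ℂ W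
  | 0 => U₀
  | n+1 => Fn ρ U₀ n ⊔ Submodule.map (Tp ρ (n+1)) U₀

theorem Fn_le_succ (ρ : WittRep W) (U₀ : Submodule ℂ W) (n : ℕ) :
    Fn ρ U₀ n ≤ Fn ρ U₀ (n + 1) := le_sup_left

theorem Fn_mono (ρ : WittRep W) (U₀ : Submodule ℂ W) : Monotone (Fn ρ U₀) :=
  monotone_nat_of_le_succ (Fn_le_succ ρ U₀)

theorem Tp_mem_Fn (ρ : WittRep W) (U₀ : Submodule ℂ W) (k : ℕ) {u : W} (hu : u ∈ U₀) :
    Tp ρ k u ∈ Fn ρ U₀ k := by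
  cases k with
  | zero => exact hu
  | succ n => exact le_sup_right (a := Fn ρ U₀ n) (Submodule.mem_map_of_mem hu)

theorem T_Fn (ρ : WittRep W) (U₀ : Submodule ℂ W) (n : ℕ) {x : W} (hx : x ∈ Fn ρ U₀ n) :
    ρ.d (-1) x ∈ Fn ρ U₀ (n + 1) := by
  induction n generalizing x with
  | zero =>
    have : ρ.d (-1) x = Tp ρ 1 x := by rw [Tp_succ, Tp_zero]
    rw [this]; exact Tp_mem_Fn ρ U₀ 1 hx
  | succ n ih =>
    rcases Submodule.mem_sup.mp hx with ⟨y, hy, z, hz, rfl⟩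
    rcases hz with ⟨u, hu, rfl⟩
    rw [map_add]
    refine add_mem (Fn_le_succ ρ U₀ (n+1) (ih hy)) ?_
    have : ρ.d (-1) (Tp ρ (n+1) u) = Tp ρ (n+2) u := (Tp_succ ρ (n+1) u).symm
    rw [this]; exact Tp_mem_Fn ρ U₀ (n+2) hu

theorem d_Fn (ρ : WittRep W) (U₀ : Submodule ℂ W) (hB : ρ.BInvariant U₀) (n : ℕ) :
    ∀ i : ℤ, 0 ≤ i → ∀ x ∈ Fn ρ U₀ n, ρ.d i x ∈ Fn ρ U₀ n := by
  induction n with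
  | zero => exact fun i hi x hx => hB i hi x hx
  | succ n ih =>
    intro i hi x hx
    rcases Submodule.mem_sup.mp hx with ⟨y, hy, z, hz, rfl⟩
    rcases hz with ⟨u, hu, rfl⟩
    rw [map_add]
    refine add_mem (Fn_le_succ ρ U₀ n (ih i hi y hy)) ?_
    have hTn : Tp ρ n u ∈ Fn ρ U₀ n := Tp_mem_Fn ρ U₀ n hu
    have key : ρ.d i (Tp ρ (n+1) u)
        = ρ.d (-1) (ρ.d i (Tp ρ n u)) + ((-1 - i : ℤ) : ℂ) • ρ.d (i - 1) (Tp ρ n u) := by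
      rw [Tp_succ]; exact dT ρ hi _
    rw [key]
    refine add_mem (T_Fn ρ U₀ n (ih i hi _ hTn)) (Submodule.smul_mem _ _ ?_)
    rcases eq_or_lt_of_le hi with h0 | h1
    · have : i - 1 = -1 := by omega
      rw [this]
      have : ρ.d (-1) (Tp ρ n u) = Tp ρ (n+1) u := (Tp_succ ρ n u).symm
      rw [this]; exact Tp_mem_Fn ρ U₀ (n+1) hu
    · exact Fn_le_succ ρ U₀ n (ih (i-1) (by omega) _ hTn)

/-- union of the filtration -/
noncomputable def GU (ρ : WittRep W) (U₀ : Submodule ℂ W) : Submodule ℂ W where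
  carrier := {w | ∃ n, w ∈ Fn ρ U₀ n}
  add_mem' := by
    rintro a b ⟨m, hm⟩ ⟨n, hn⟩
    exact ⟨max m n, add_mem (Fn_mono ρ U₀ (le_max_left m n) hm)
      (Fn_mono ρ U₀ (le_max_right m n) hn)⟩
  zero_mem' := ⟨0, zero_mem _⟩
  smul_mem' := by rintro c x ⟨n, hn⟩; exact ⟨n, Submodule.smul_mem _ c hn⟩

theorem spanning (ρ : WittRep W) (hsimple : ρ.IsSimple) (U₀ : Submodule ℂ W)
    (hB : ρ.BInvariant U₀) (hne : U₀ ≠ ⊥) (w : W) : ∃ n, w ∈ Fn ρ U₀ n := by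
  have hinv : ρ.Invariant (GU ρ U₀) := by
    intro i hi u hu
    rcases hu with ⟨n, hn⟩
    rcases eq_or_lt_of_le hi with h0 | h1
    · have : i = -1 := h0.symm
      subst this
      exact ⟨n + 1, T_Fn ρ U₀ n hn⟩
    · exact ⟨n, d_Fn ρ U₀ hB n i (by omega) _ hn⟩
  rcases hsimple.2 _ hinv with hbot | htop
  · exfalso
    apply hne
    rw [eq_bot_iff]
    intro x hx
    have : x ∈ GU ρ U₀ := ⟨0, hx⟩
    rw [hbot] at this
    exact this
  · have : w ∈ GU ρ U₀ := by rw [htop]; trivial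
    exact this

end Stmt3Aux

namespace Stmt3Aux

variable {W : Type*} [AddCommGroup W] [Module ℂ W]

/-- high modes kill T^k u when u ∈ K_{s+1} -/
theorem E1 (ρ : WittRep W) (s : ℕ) {u : W} (hu : u ∈ KN ρ (s + 1)) :
    ∀ k : ℕ, ∀ m : ℤ, (s : ℤ) + k < m → ρ.d m (Tp ρ k u) = 0 := by
  intro k
  induction k with
  | zero =>
    intro m hm
    rw [Tp_zero]
    exact hu m (by push_cast; push_cast at hm; omega)
  | succ k ih =>
    intro m hm
    push_cast at hm
    have hm0 : (0:ℤ) ≤ m := by omega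
    rw [Tp_succ, dT ρ hm0, ih m (by omega), map_zero, ih (m-1) (by omega), smul_zero, add_zero]

noncomputable def gam (s : ℕ) : ℕ → ℂ
  | 0 => 1
  | k+1 => (-1 - ((s : ℂ) + k + 1)) * gam s k

theorem gam_ne_zero (s : ℕ) : ∀ k, gam s k ≠ 0 := by
  intro k
  induction k with
  | zero => exact one_ne_zero
  | succ k ih =>
    have h1 : (-1 - ((s : ℂ) + k + 1)) ≠ 0 := by
      have : ((s + k + 2 : ℕ) : ℂ) ≠ 0 := Nat.cast_ne_zero.mpr (by omega)
      push_cast at this ⊢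
      intro h
      apply this
      linear_combination -h
    exact mul_ne_zero h1 ih

theorem E2 (ρ : WittRep W) (s : ℕ) {u : W} (hu : u ∈ KN ρ (s + 1)) :
    ∀ k : ℕ, ρ.d ((s : ℤ) + k) (Tp ρ k u) = gam s k • ρ.d (s : ℤ) u := by
  intro k
  induction k with
  | zero => simp [Tp_zero, gam]
  | succ k ih =>
    have hm0 : (0:ℤ) ≤ (s : ℤ) + ((k+1:ℕ):ℤ) := by positivity
    rw [Tp_succ, dT ρ hm0, E1 ρ s hu k ((s : ℤ) + ((k+1:ℕ):ℤ)) (by push_cast; omega), map_zero,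
        zero_add]
    have harg : (s : ℤ) + ((k+1:ℕ):ℤ) - 1 = (s : ℤ) + k := by push_cast; omega
    rw [harg, ih, gam]
    rw [smul_smul]
    congr 1
    push_cast
    ring

/-- high modes kill all of Fn when U₀ ⊆ K_{s+1} -/
theorem E3 (ρ : WittRep W) (s : ℕ) (U₀ : Submodule ℂ W) (hU : U₀ ≤ KN ρ (s + 1)) :
    ∀ j : ℕ, ∀ x ∈ Fn ρ U₀ j, ∀ m : ℤ, (s : ℤ) + j < m → ρ.d m x = 0 := by
  intro j
  induction j with
  | zero => intro x hx m hm; exact E1 ρ s (hU hx) 0 m (by exact_mod_cast hm)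
  | succ j ih =>
    intro x hx m hm
    rcases Submodule.mem_sup.mp hx with ⟨y, hy, z, hz, rfl⟩
    rcases hz with ⟨u, hu, rfl⟩
    push_cast at hm
    rw [map_add, ih y hy m (by omega), E1 ρ s (hU hu) (j+1) m (by push_cast; omega), add_zero]

/-- The key extraction argument. -/
theorem main_extract (ρ : WittRep W) (hsimple : ρ.IsSimple) (s : ℕ) (U₀ : Submodule ℂ W)
    (hB : ρ.BInvariant U₀) (hne : U₀ ≠ ⊥) (hKle : U₀ ≤ KN ρ (s + 1))
    (hinj : ∀ u ∈ U₀, ρ.d (s : ℤ) u = 0 → u = 0)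
    {w : W} (hw : w ∈ KN ρ (s + 1)) : w ∈ U₀ := by
  have hex : ∃ n, w ∈ Fn ρ U₀ n := spanning ρ hsimple U₀ hB hne w
  classical
  have hn : w ∈ Fn ρ U₀ (Nat.find hex) := Nat.find_spec hex
  rcases hh : Nat.find hex with _ | j
  · rw [hh] at hn; exact hn
  · rw [hh] at hn
    exfalso
    rcases Submodule.mem_sup.mp hn with ⟨y, hy, z, hz, hw'⟩
    rcases hz with ⟨u, hu, rfl⟩
    have hzero : ρ.d ((s : ℤ) + ((j+1 : ℕ) : ℤ)) w = 0 := hw _ (by push_cast; omega)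
    rw [← hw', map_add, E3 ρ s U₀ hKle j y hy _ (by push_cast; omega), zero_add,
        E2 ρ s (hKle hu) (j+1)] at hzero
    have hds : ρ.d (s : ℤ) u = 0 := by
      rcases smul_eq_zero.mp hzero with h | h
      · exact absurd h (gam_ne_zero s (j+1))
      · exact h
    have hu0 : u = 0 := hinj u hu hds
    have hwj : w ∈ Fn ρ U₀ j := by
      rw [← hw', hu0, map_zero, add_zero]; exact hy
    exact Nat.find_min hex (by omega) hwj

end Stmt3Aux

namespace Stmt3Aux

variable {W : Type*} [AddCommGroup W] [Module ℂ W]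

/-- Case `K₁ = ⊥`: the bottom nonzero level of the `ord` filtration is the minimum
nonzero 𝔟-submodule. -/
theorem caseA (ρ : WittRep W) (hO : ρ.InO) (hsimple : ρ.IsSimple) (hK1 : KN ρ 1 = ⊥) :
    ∃ V : Submodule ℂ W, ρ.BInvariant V ∧ V ≠ ⊥ ∧
      ∀ U : Submodule ℂ W, ρ.BInvariant U → U ≠ ⊥ → V ≤ U := by
  classical
  obtain ⟨v, hv⟩ := hsimple.1
  have hKex : ∃ N : ℕ, KN ρ N ≠ ⊥ := by
    obtain ⟨n, hn⟩ := hO v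
    exact ⟨n, (Submodule.ne_bot_iff _).mpr ⟨v, hn, hv⟩⟩
  refine ⟨KN ρ (Nat.find hKex), KN_binv ρ _, Nat.find_spec hKex, ?_⟩
  intro U hUB hUne
  obtain ⟨u₀, hu₀U, hu₀ne⟩ := (Submodule.ne_bot_iff _).mp hUne
  have hUex : ∃ N : ℕ, ∃ x, x ∈ U ⊓ KN ρ N ∧ x ≠ 0 := by
    obtain ⟨n, hn⟩ := hO u₀
    exact ⟨n, u₀, ⟨hu₀U, hn⟩, hu₀ne⟩
  obtain ⟨x, hx, hxne⟩ := Nat.find_spec hUex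
  have hNU2 : 2 ≤ Nat.find hUex := by
    by_contra h
    push_neg at h
    have hx1 : x ∈ KN ρ 1 := KN_mono ρ (by omega) hx.2
    rw [hK1] at hx1
    exact hxne hx1
  set s : ℕ := Nat.find hUex - 1 with hs_def
  have hsNU : s + 1 = Nat.find hUex := by omega
  set U₀ : Submodule ℂ W := U ⊓ KN ρ (s + 1) with hU₀
  have hU₀ne : U₀ ≠ ⊥ := by
    rw [hU₀, hsNU]
    exact (Submodule.ne_bot_iff _).mpr ⟨x, hx, hxne⟩
  have hU₀B : ρ.BInvariant U₀ := fun i hi u hu =>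
    ⟨hUB i hi u hu.1, KN_binv ρ (s+1) i hi u hu.2⟩
  have hinj : ∀ u ∈ U₀, ρ.d (s : ℤ) u = 0 → u = 0 := by
    intro u hu hds
    by_contra hune
    have huKs : u ∈ KN ρ s := by
      intro i hi
      rcases eq_or_lt_of_le hi with h0 | h1
      · rw [← h0]; exact hds
      · exact hu.2 i (by push_cast; omega)
    exact Nat.find_min hUex (by omega) ⟨u, ⟨hu.1, huKs⟩, hune⟩
  intro w hw
  have hNle : Nat.find hKex ≤ s + 1 := by
    rw [hsNU]
    exact Nat.find_min' hKex ((Submodule.ne_bot_iff _).mpr ⟨x, hx.2, hxne⟩)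
  have hwK : w ∈ KN ρ (s + 1) := KN_mono ρ hNle hw
  exact (main_extract ρ hsimple s U₀ hU₀B hU₀ne inf_le_right hinj hwK).1

end Stmt3Aux

namespace Stmt3Aux

open Polynomial

variable {W : Type*} [AddCommGroup W] [Module ℂ W]

theorem aeval_eigen (f : Module.End ℂ W) {μ : ℂ} {x : W} (h : f x = μ • x) (p : ℂ[X]) :
    Polynomial.aeval f p x = p.eval μ • x := by
  induction p using Polynomial.induction_on' with
  | add p q hp hq => rw [map_add, LinearMap.add_apply, hp, hq, eval_add, add_smul]
  | monomial n a =>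
    have hpow : ∀ n : ℕ, (f ^ n) x = μ ^ n • x := by
      intro n
      induction n with
      | zero => simp
      | succ n ih =>
        rw [pow_succ, Module.End.mul_apply, h, map_smul, ih, smul_smul, ← pow_succ']
    rw [aeval_monomial, Module.End.mul_apply, hpow, map_smul,
        Module.algebraMap_end_apply, eval_monomial, smul_smul, mul_comm]

theorem aeval_mem (f : Module.End ℂ W) (M : Submodule ℂ W) (hM : ∀ x ∈ M, f x ∈ M)
    {x : W} (hx : x ∈ M) (p : ℂ[X]) : Polynomial.aeval f p x ∈ M := by
  induction p using Polynomial.induction_on' with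
  | add p q hp hq => rw [map_add, LinearMap.add_apply]; exact add_mem hp hq
  | monomial n a =>
    have hpow : ∀ n : ℕ, (f ^ n) x ∈ M := by
      intro n
      induction n with
      | zero => simpa using hx
      | succ n ih => rw [pow_succ', Module.End.mul_apply]; exact hM _ ih
    rw [aeval_monomial, Module.End.mul_apply, Module.algebraMap_end_apply]
    exact Submodule.smul_mem _ _ (hpow n)

/-- Existence of a highest weight vector when `K₁ ≠ ⊥`. -/
theorem exists_hw (ρ : WittRep W) (hsimple : ρ.IsSimple) (hK1 : KN ρ 1 ≠ ⊥) :
    ∃ (w₀ : W) (b' : ℂ), w₀ ≠ 0 ∧ w₀ ∈ KN ρ 1 ∧ ρ.d 0 w₀ = b' • w₀ := by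
  classical
  obtain ⟨w, hwK, hwne⟩ := (Submodule.ne_bot_iff _).mp hK1
  set d0 : Module.End ℂ W := ρ.d 0 with hd0
  have hd0K : ∀ x ∈ KN ρ 1, d0 x ∈ KN ρ 1 := fun x hx => KN_binv ρ 1 0 le_rfl x hx
  set φ : ℂ[X] →ₗ[ℂ] W :=
    { toFun := fun p => Polynomial.aeval d0 p w
      map_add' := fun p q => by simp
      map_smul' := fun c p => by simp } with hφ
  have hφK : ∀ p, φ p ∈ KN ρ 1 := fun p => aeval_mem d0 (KN ρ 1) hd0K hwK p
  have hφX : ∀ p, φ (X * p) = d0 (φ p) := by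
    intro p
    show Polynomial.aeval d0 (X * p) w = _
    rw [map_mul, Module.End.mul_apply, aeval_X]
    rfl

  by_cases hann : ∃ p : ℂ[X], p ≠ 0 ∧ Polynomial.aeval d0 p w = 0
  · obtain ⟨p₁, hp₁, hp₁w⟩ := hann
    have dex : ∃ dd : ℕ, ∃ p : ℂ[X], p ≠ 0 ∧ Polynomial.aeval d0 p w = 0 ∧ p.natDegree = dd :=
      ⟨p₁.natDegree, p₁, hp₁, hp₁w, rfl⟩
    obtain ⟨p, hpne, hpw, hpd⟩ := Nat.find_spec dex
    have hdegpos : 0 < p.natDegree := by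
      rcases Nat.eq_zero_or_pos p.natDegree with h0 | h
      · exfalso
        obtain ⟨a, rfl⟩ := Polynomial.natDegree_eq_zero.mp h0
        have ha : a ≠ 0 := fun h => hpne (by rw [h, map_zero])
        have : a • w = 0 := by rwa [aeval_C, Module.algebraMap_end_apply] at hpw
        rcases smul_eq_zero.mp this with h | h
        · exact ha h
        · exact hwne h
      · exact h
    obtain ⟨c, hc⟩ := IsAlgClosed.exists_root p (by
      rw [Polynomial.degree_eq_natDegree hpne]
      exact_mod_cast (by omega : p.natDegree ≠ 0))
    obtain ⟨q, hq⟩ := Polynomial.dvd_iff_isRoot.mpr hc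
    have hqne : q ≠ 0 := by rintro rfl; rw [mul_zero] at hq; exact hpne hq
    have hdeg : q.natDegree < p.natDegree := by
      rw [hq, Polynomial.natDegree_mul (Polynomial.X_sub_C_ne_zero c) hqne,
        Polynomial.natDegree_X_sub_C]
      omega
    refine ⟨φ q, c, ?_, hφK q, ?_⟩
    · intro h0
      exact Nat.find_min dex (hpd ▸ hdeg) ⟨q, hqne, h0, rfl⟩
    · have : φ p = 0 := hpw
      rw [hq] at this
      have hexp : φ ((X - C c) * q) = d0 (φ q) - c • (φ q) := by
        show Polynomial.aeval d0 ((X - C c) * q) w = _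
        rw [map_mul, Module.End.mul_apply, map_sub, aeval_X, aeval_C,
          LinearMap.sub_apply, Module.algebraMap_end_apply]
        rfl
      rw [hexp] at this
      have := sub_eq_zero.mp this
      exact this
  · push_neg at hann
    exfalso
    set B' : Submodule ℂ W := Submodule.map (ρ.d 0) (LinearMap.range φ) with hB'
    have memB' : ∀ x, x ∈ B' ↔ ∃ p : ℂ[X], x = φ (X * p) := by
      intro x
      constructor
      · rintro ⟨y, ⟨p, rfl⟩, rfl⟩
        exact ⟨p, (hφX p).symm⟩
      · rintro ⟨p, rfl⟩
        exact ⟨φ p, ⟨p, rfl⟩, (hφX p).symm⟩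
    have hB'K : B' ≤ KN ρ 1 := by
      intro x hx
      obtain ⟨p, rfl⟩ := (memB' x).mp hx
      exact hφK _
    have hB'B : ρ.BInvariant B' := by
      intro i hi u hu
      rcases eq_or_lt_of_le hi with h0 | h1
      · obtain ⟨p, rfl⟩ := (memB' u).mp hu
        rw [← h0]
        exact (memB' _).mpr ⟨X * p, by rw [hφX (X*p)]⟩
      · rw [hB'K hu i (by omega)]
        exact zero_mem _
    have hB'ne : B' ≠ ⊥ := by
      refine (Submodule.ne_bot_iff _).mpr ⟨φ X, (memB' _).mpr ⟨1, by rw [mul_one]⟩, ?_⟩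
      exact hann X Polynomial.X_ne_zero
    have hinj : ∀ u ∈ B', ρ.d ((0:ℕ) : ℤ) u = 0 → u = 0 := by
      intro u hu hd
      obtain ⟨p, rfl⟩ := (memB' u).mp hu
      have : φ (X * (X * p)) = 0 := by
        rw [hφX]
        exact hd
      have hp0 : X * (X * p) = 0 := by
        by_contra h
        exact hann _ h this
      have : p = 0 := by
        rcases mul_eq_zero.mp hp0 with h | h
        · exact absurd h Polynomial.X_ne_zero
        · rcases mul_eq_zero.mp h with h' | h'
          · exact absurd h' Polynomial.X_ne_zero
          · exact h'
      rw [this, mul_zero, map_zero]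
    have hwB' : w ∈ B' := by
      have := main_extract ρ hsimple 0 B' hB'B hB'ne (by simpa using hB'K) hinj
        (w := w) (by simpa using hwK)
      exact this
    obtain ⟨p, hp⟩ := (memB' w).mp hwB'
    have hφ1 : φ 1 = w := by
      show Polynomial.aeval d0 1 w = w
      rw [map_one]
      rfl
    have : φ (1 - X * p) = 0 := by rw [map_sub, hφ1, ← hp, sub_self]
    have h1 : (1 : ℂ[X]) - X * p = 0 := by
      by_contra h
      exact hann _ h this
    have h2 : (X * p : ℂ[X]) = 1 := by linear_combination -h1
    have := congrArg (fun r : ℂ[X] => r.coeff 0) h2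
    simp [Polynomial.mul_coeff_zero] at this

end Stmt3Aux

namespace Stmt3Aux

open Polynomial

variable {W : Type*} [AddCommGroup W] [Module ℂ W]

/-- coefficient of d₁ -/
noncomputable def aco (b' : ℂ) (k : ℕ) : ℂ := (k : ℂ) * ((k : ℂ) - 1) - 2 * (k : ℂ) * b'

/-- coefficient of d₂ -/
noncomputable def cco (b' : ℂ) (k : ℕ) : ℂ :=
  3 * b' * (k : ℂ) * ((k : ℂ) - 1) - (k : ℂ) * ((k : ℂ) - 1) * ((k : ℂ) - 2)

section HW

variable (ρ : WittRep W) (w₀ : W) (b' : ℂ)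

/-- the string of vectors T^k w₀ -/
noncomputable def vv (k : ℕ) : W := Tp ρ k w₀

theorem vv_zero : vv ρ w₀ 0 = w₀ := rfl

theorem vv_succ (k : ℕ) : vv ρ w₀ (k + 1) = ρ.d (-1) (vv ρ w₀ k) := Tp_succ ρ k w₀

theorem Tp_vv (a b : ℕ) : Tp ρ a (vv ρ w₀ b) = vv ρ w₀ (a + b) := (Tp_add ρ a b w₀).symm

variable {ρ w₀ b'}
variable (hK : w₀ ∈ KN ρ 1) (h0 : ρ.d 0 w₀ = b' • w₀)

include h0 in
theorem d0_vv : ∀ k : ℕ, ρ.d 0 (vv ρ w₀ k) = (b' - k) • vv ρ w₀ k := by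
  intro k
  induction k with
  | zero => simpa [vv_zero] using h0
  | succ k ih =>
    have hd := dT ρ (le_refl (0:ℤ)) (vv ρ w₀ k)
    rw [← vv_succ] at hd
    have : (0:ℤ) - 1 = -1 := by omega
    rw [this] at hd
    rw [hd, ih, map_smul, ← vv_succ]
    have : ((-1 - 0 : ℤ) : ℂ) = -1 := by norm_num
    rw [this]
    push_cast
    module


include hK h0 in
theorem d1_vv : ∀ k : ℕ, ρ.d 1 (vv ρ w₀ (k + 1)) = aco b' (k + 1) • vv ρ w₀ k := by
  intro k
  induction k with
  | zero =>
    have hd := dT ρ (by omega : (0:ℤ) ≤ 1) (vv ρ w₀ 0)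
    rw [← vv_succ] at hd
    have h10 : (1:ℤ) - 1 = 0 := by omega
    rw [h10] at hd
    rw [hd, vv_zero, hK 1 (by norm_num), map_zero, zero_add, h0]
    rw [smul_smul]
    congr 1
    simp only [aco]
    push_cast
    ring
  | succ k ih =>
    have hd := dT ρ (by omega : (0:ℤ) ≤ 1) (vv ρ w₀ (k+1))
    rw [← vv_succ] at hd
    have h10 : (1:ℤ) - 1 = 0 := by omega
    rw [h10] at hd
    rw [hd, ih, map_smul, ← vv_succ, d0_vv h0]
    rw [smul_smul, ← add_smul]
    congr 1
    simp only [aco]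
    push_cast
    ring

include hK h0 in
theorem d2_vv : ∀ k : ℕ, ρ.d 2 (vv ρ w₀ (k + 2)) = cco b' (k + 2) • vv ρ w₀ k := by
  have hd2v1 : ρ.d 2 (vv ρ w₀ 1) = 0 := by
    have hd := dT ρ (by omega : (0:ℤ) ≤ 2) (vv ρ w₀ 0)
    rw [← vv_succ] at hd
    have h21 : (2:ℤ) - 1 = 1 := by omega
    rw [h21] at hd
    rw [hd, vv_zero, hK 2 (by norm_num), map_zero, zero_add, hK 1 (by norm_num), smul_zero]
  intro k
  induction k with
  | zero =>
    have hd := dT ρ (by omega : (0:ℤ) ≤ 2) (vv ρ w₀ 1)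
    rw [← vv_succ] at hd
    have h21 : (2:ℤ) - 1 = 1 := by omega
    rw [h21] at hd
    rw [hd, hd2v1, map_zero, zero_add, d1_vv hK h0 0]
    rw [smul_smul]
    congr 1
    simp only [aco, cco]
    push_cast
    ring
  | succ k ih =>
    have hd := dT ρ (by omega : (0:ℤ) ≤ 2) (vv ρ w₀ (k+2))
    rw [← vv_succ] at hd
    have h21 : (2:ℤ) - 1 = 1 := by omega
    rw [h21] at hd
    rw [hd, ih, map_smul, ← vv_succ, d1_vv hK h0 (k+1)]
    rw [smul_smul, ← add_smul]
    congr 1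
    simp only [aco, cco]
    push_cast
    ring

variable (ρ w₀) in
/-- span of v₀,…,v_l -/
noncomputable def Ysp (l : ℕ) : Submodule ℂ W :=
  Submodule.span ℂ (Set.range (fun j : Fin (l + 1) => vv ρ w₀ (j : ℕ)))

theorem vv_mem_Ysp {j l : ℕ} (h : j ≤ l) : vv ρ w₀ j ∈ Ysp ρ w₀ l :=
  Submodule.subset_span ⟨⟨j, by omega⟩, rfl⟩

theorem Ysp_mono {l l' : ℕ} (h : l ≤ l') : Ysp ρ w₀ l ≤ Ysp ρ w₀ l' := by
  apply Submodule.span_le.mpr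
  rintro _ ⟨j, rfl⟩
  exact vv_mem_Ysp (by omega : (j:ℕ) ≤ l')

theorem T_Ysp {l : ℕ} {x : W} (hx : x ∈ Ysp ρ w₀ l) : ρ.d (-1) x ∈ Ysp ρ w₀ (l + 1) := by
  induction hx using Submodule.span_induction with
  | mem x hx =>
    obtain ⟨j, rfl⟩ := hx
    rw [← vv_succ]
    exact vv_mem_Ysp (by omega)
  | zero => rw [map_zero]; exact zero_mem _
  | add x y _ _ ihx ihy => rw [map_add]; exact add_mem ihx ihy
  | smul c x _ ih => rw [map_smul]; exact Submodule.smul_mem _ _ ih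

include h0 in
theorem d0_Ysp {l : ℕ} {x : W} (hx : x ∈ Ysp ρ w₀ l) : ρ.d 0 x ∈ Ysp ρ w₀ l := by
  induction hx using Submodule.span_induction with
  | mem x hx =>
    obtain ⟨j, rfl⟩ := hx
    rw [d0_vv h0]
    exact Submodule.smul_mem _ _ (vv_mem_Ysp (by omega))
  | zero => rw [map_zero]; exact zero_mem _
  | add x y _ _ ihx ihy => rw [map_add]; exact add_mem ihx ihy
  | smul c x _ ih => rw [map_smul]; exact Submodule.smul_mem _ _ ih

include hK h0 in
theorem dlow : ∀ l : ℕ, ∀ i : ℤ, 1 ≤ i → ρ.d i (vv ρ w₀ l) ∈ Ysp ρ w₀ l := by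
  intro l
  induction l with
  | zero => intro i hi; rw [vv_zero, hK i (by omega), ]; exact zero_mem _
  | succ l ih =>
    intro i hi
    have hd := dT ρ (by omega : (0:ℤ) ≤ i) (vv ρ w₀ l)
    rw [← vv_succ] at hd
    rw [hd]
    refine add_mem (T_Ysp (ih i hi)) (Submodule.smul_mem _ _ ?_)
    rcases eq_or_lt_of_le hi with h1 | h2
    · have : i - 1 = 0 := by omega
      rw [this, d0_vv h0]
      exact Submodule.smul_mem _ _ (vv_mem_Ysp (by omega))
    · exact Ysp_mono (by omega) (ih (i-1) (by omega))

include hK h0 in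
theorem Ysp_binv (l : ℕ) : ρ.BInvariant (Ysp ρ w₀ l) := by
  intro i hi x hx
  induction hx using Submodule.span_induction with
  | mem x hx =>
    obtain ⟨j, rfl⟩ := hx
    rcases eq_or_lt_of_le hi with h1 | h2
    · rw [← h1, d0_vv h0]
      exact Submodule.smul_mem _ _ (vv_mem_Ysp (by omega))
    · exact Ysp_mono (by omega : (j:ℕ) ≤ l) (dlow hK h0 j i (by omega))
  | zero => rw [map_zero]; exact zero_mem _
  | add x y _ _ ihx ihy => rw [map_add]; exact add_mem ihx ihy
  | smul c x _ ih => rw [map_smul]; exact Submodule.smul_mem _ _ ih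

include h0 in
/-- projection onto an eigen-component inside a d₀-invariant submodule -/
theorem proj (M : Submodule ℂ W) (hM : ∀ x ∈ M, ρ.d 0 x ∈ M) (t : Finset ℕ) (ξ : ℕ → ℂ)
    (hxM : (∑ k ∈ t, ξ k • vv ρ w₀ k) ∈ M) {k₀ : ℕ} (hk₀ : k₀ ∈ t) (hne : ξ k₀ ≠ 0) :
    vv ρ w₀ k₀ ∈ M := by
  classical
  set q : ℂ[X] := ∏ j ∈ t.erase k₀, (X - C (b' - j)) with hq
  have heval : ∀ k : ℕ, q.eval (b' - k) = ∏ j ∈ t.erase k₀, ((j : ℂ) - k) := by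
    intro k
    rw [hq, Polynomial.eval_prod]
    apply Finset.prod_congr rfl
    intro j _
    rw [Polynomial.eval_sub, Polynomial.eval_X, Polynomial.eval_C]
    ring
  have haem : Polynomial.aeval (ρ.d 0 : Module.End ℂ W) q (∑ k ∈ t, ξ k • vv ρ w₀ k) ∈ M :=
    aeval_mem _ M hM hxM q
  have hcomp : Polynomial.aeval (ρ.d 0 : Module.End ℂ W) q (∑ k ∈ t, ξ k • vv ρ w₀ k)
      = (ξ k₀ * q.eval (b' - k₀)) • vv ρ w₀ k₀ := by
    rw [map_sum]
    have hterm : ∀ k ∈ t, Polynomial.aeval (ρ.d 0 : Module.End ℂ W) q (ξ k • vv ρ w₀ k)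
        = (ξ k * q.eval (b' - k)) • vv ρ w₀ k := by
      intro k _
      rw [map_smul, aeval_eigen (ρ.d 0 : Module.End ℂ W) (d0_vv h0 k) q, smul_smul]
    rw [Finset.sum_congr rfl hterm]
    apply Finset.sum_eq_single_of_mem k₀ hk₀
    intro k hk hkne
    rw [heval k, Finset.prod_eq_zero (Finset.mem_erase.mpr ⟨hkne, hk⟩) (by ring), mul_zero,
      zero_smul]
  have hsc : ξ k₀ * q.eval (b' - k₀) ≠ 0 := by
    refine mul_ne_zero hne ?_
    rw [heval k₀]
    rw [Finset.prod_ne_zero_iff]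
    intro j hj
    have hjne : j ≠ k₀ := (Finset.mem_erase.mp hj).1
    intro hc
    apply hjne
    have : (j : ℂ) = (k₀ : ℂ) := by linear_combination hc
    exact_mod_cast this
  rw [hcomp] at haem
  have := Submodule.smul_mem M (ξ k₀ * q.eval (b' - k₀))⁻¹ haem
  rwa [smul_smul, inv_mul_cancel₀ hsc, one_smul] at this

end HW

end Stmt3Aux

namespace Stmt3Aux

open Polynomial

variable {W : Type*} [AddCommGroup W] [Module ℂ W]

section HW2

variable {ρ : WittRep W} {w₀ : W} {b' : ℂ}
variable (hK : w₀ ∈ KN ρ 1) (h0 : ρ.d 0 w₀ = b' • w₀)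

include hK h0 in
theorem span_w0_binv : ρ.BInvariant (Submodule.span ℂ {w₀}) := by
  intro i hi u hu
  obtain ⟨c, rfl⟩ := Submodule.mem_span_singleton.mp hu
  rw [map_smul]
  rcases eq_or_lt_of_le hi with h1 | h2
  · rw [← h1, h0]
    exact Submodule.smul_mem _ _ (Submodule.smul_mem _ _ (Submodule.mem_span_singleton_self w₀))
  · rw [hK i (by omega), smul_zero]
    exact zero_mem _

/-- expansion of elements of the filtration over `span{w₀}` -/
theorem exp_Fn : ∀ n : ℕ, ∀ x ∈ Fn ρ (Submodule.span ℂ {w₀}) n,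
    ∃ ξ : ℕ → ℂ, x = ∑ k ∈ Finset.range (n + 1), ξ k • vv ρ w₀ k := by
  intro n
  induction n with
  | zero =>
    intro x hx
    obtain ⟨c, rfl⟩ := Submodule.mem_span_singleton.mp hx
    exact ⟨fun _ => c, by rw [Finset.sum_range_one]; rfl⟩
  | succ n ih =>
    intro x hx
    rcases Submodule.mem_sup.mp hx with ⟨y, hy, z, hz, rfl⟩
    rcases hz with ⟨u, hu, rfl⟩
    obtain ⟨c, rfl⟩ := Submodule.mem_span_singleton.mp hu
    obtain ⟨ξ, hξ⟩ := ih y hy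
    refine ⟨fun k => if k = n + 1 then c else ξ k, ?_⟩
    rw [Finset.sum_range_succ]
    beta_reduce
    rw [if_pos rfl, hξ, map_smul]
    congr 1
    apply Finset.sum_congr rfl
    intro k hk
    rw [if_neg (by have := Finset.mem_range.mp hk; omega)]

end HW2

/-- Case `K₁ ≠ ⊥`: the span of a highest weight vector is the minimum
nonzero 𝔟-submodule. -/
theorem caseB (ρ : WittRep W) (hnt : ¬ ρ.IsTrivial) (hsimple : ρ.IsSimple)
    (hK1 : KN ρ 1 ≠ ⊥) :
    ∃ V : Submodule ℂ W, ρ.BInvariant V ∧ V ≠ ⊥ ∧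
      ∀ U : Submodule ℂ W, ρ.BInvariant U → U ≠ ⊥ → V ≤ U := by
  classical
  obtain ⟨w₀, b', hw₀ne, hK, h0⟩ := exists_hw ρ hsimple hK1
  set U₀ : Submodule ℂ W := Submodule.span ℂ {w₀} with hU₀def
  have hU₀B : ρ.BInvariant U₀ := span_w0_binv hK h0
  have hU₀ne : U₀ ≠ ⊥ := by
    refine (Submodule.ne_bot_iff _).mpr ⟨w₀, Submodule.mem_span_singleton_self w₀, hw₀ne⟩
  by_cases hdep : ∃ n, vv ρ w₀ n ∈ Submodule.span ℂ (vv ρ w₀ '' {l | l < n})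
  · -- dependence leads to a contradiction
    exfalso
    have hn0 : Nat.find hdep ≠ 0 := by
      intro h
      have := Nat.find_spec hdep
      rw [h] at this
      have hempty : {l : ℕ | l < 0} = (∅ : Set ℕ) := by
        ext l; simp
      rw [hempty, Set.image_empty, Submodule.span_empty, Submodule.mem_bot, vv_zero] at this
      exact hw₀ne this
    set n : ℕ := Nat.find hdep with hndef
    have hn1 : 1 ≤ n := by omega
    have hvl : ∀ l, l < n → vv ρ w₀ l ≠ 0 := by
      intro l hl hzero
      exact Nat.find_min hdep hl (by rw [hzero]; exact zero_mem _)
    have hind : LinearIndependent ℂ (fun l : Fin n => vv ρ w₀ (l : ℕ)) := by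
      apply Module.End.eigenvectors_linearIndependent' (ρ.d 0 : Module.End ℂ W)
        (fun l : Fin n => b' - (l : ℕ))
      · intro l l' h
        have : ((l : ℕ) : ℂ) = ((l' : ℕ) : ℂ) := by linear_combination -h
        have : (l : ℕ) = (l' : ℕ) := by exact_mod_cast this
        exact Fin.ext this
      · intro l
        exact ⟨Module.End.mem_eigenspace_iff.mpr (d0_vv h0 (l : ℕ)), hvl _ l.2⟩
    have himg : vv ρ w₀ '' {l | l < n} = Set.range (fun l : Fin n => vv ρ w₀ (l : ℕ)) := by
      ext x
      constructor
      · rintro ⟨l, hl, rfl⟩; exact ⟨⟨l, hl⟩, rfl⟩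
      · rintro ⟨l, rfl⟩; exact ⟨(l : ℕ), l.2, rfl⟩
    have hmem := Nat.find_spec hdep
    rw [← hndef, himg] at hmem
    obtain ⟨ξ, hξ⟩ := (Submodule.mem_span_range_iff_exists_fun ℂ).mp hmem
    -- applying d₀ shows vv n = 0
    have hvn0 : vv ρ w₀ n = 0 := by
      have happ : ρ.d 0 (∑ l : Fin n, ξ l • vv ρ w₀ (l : ℕ)) = (b' - n) • vv ρ w₀ n := by
        rw [hξ, d0_vv h0]
      rw [map_sum, ← hξ, Finset.smul_sum] at happ
      have hsum : ∑ l : Fin n, (ξ l * (((n : ℕ) : ℂ) - ((l : ℕ) : ℂ))) • vv ρ w₀ (l : ℕ)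
          = 0 := by
        have := sub_eq_zero.mpr happ
        rw [← Finset.sum_sub_distrib] at this
        rw [← this]
        apply Finset.sum_congr rfl
        intro l _
        rw [map_smul, d0_vv h0, smul_smul, smul_smul, ← sub_smul]
        congr 1
        ring
      have hcoef := Fintype.linearIndependent_iff.mp hind _ hsum
      have hξ0 : ∀ l : Fin n, ξ l = 0 := by
        intro l
        have hl := hcoef l
        rcases mul_eq_zero.mp hl with h | h
        · exact h
        · exfalso
          have : ((n : ℕ) : ℂ) = ((l : ℕ) : ℂ) := by linear_combination h
          have : (n : ℕ) = (l : ℕ) := by exact_mod_cast this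
          omega
      rw [← hξ]
      apply Finset.sum_eq_zero
      intro l _
      rw [hξ0 l, zero_smul]
    -- coefficient identities
    have haco : aco b' n = 0 := by
      obtain ⟨m, hm⟩ : ∃ m, n = m + 1 := ⟨n - 1, by omega⟩
      have h1 := d1_vv hK h0 m
      have hv : vv ρ w₀ (m + 1) = 0 := by rw [← hm]; exact hvn0
      rw [hv, map_zero] at h1
      rw [hm]
      rcases smul_eq_zero.mp h1.symm with h | h
      · exact h
      · exact absurd h (hvl m (by omega))
    rcases Nat.lt_or_ge n 2 with hn2 | hn2
    · -- n = 1 : the module is trivial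
      have hn1' : n = 1 := by omega
      have hb'0 : b' = 0 := by
        rw [hn1'] at haco
        simp only [aco] at haco
        push_cast at haco
        linear_combination -haco / 2
      have hv1 : vv ρ w₀ 1 = 0 := by rw [← hn1']; exact hvn0
      have hvk : ∀ k : ℕ, vv ρ w₀ (k + 1) = 0 := by
        intro k
        have : vv ρ w₀ (k + 1) = Tp ρ k (vv ρ w₀ 1) := by
          rw [Tp_vv]
        rw [this, hv1, map_zero]
      have hall : ∀ x : W, ∃ c : ℂ, x = c • w₀ := by
        intro x
        obtain ⟨m, hm⟩ := spanning ρ hsimple U₀ hU₀B hU₀ne x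
        obtain ⟨ξ, hξ⟩ := exp_Fn m x hm
        refine ⟨ξ 0, ?_⟩
        rw [hξ]
        rw [Finset.sum_eq_single 0]
        · rfl
        · intro k _ hk
          obtain ⟨k', rfl⟩ : ∃ k', k = k' + 1 := ⟨k - 1, by omega⟩
          rw [hvk k', smul_zero]
        · intro h
          simp at h
      apply hnt
      intro i hi
      apply LinearMap.ext
      intro x
      obtain ⟨c, rfl⟩ := hall x
      rw [map_smul, LinearMap.zero_apply]
      have hdw : ρ.d i w₀ = 0 := by
        rcases eq_or_lt_of_le hi with h1 | h2
        · rw [← h1]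
          have : vv ρ w₀ 1 = ρ.d (-1) w₀ := by rw [vv_succ, vv_zero]
          rw [← this, hv1]
        · rcases eq_or_lt_of_le (by omega : (0:ℤ) ≤ i) with h1 | h2'
          · rw [← h1, h0, hb'0, zero_smul]
          · exact hK i (by omega)
      rw [hdw, smul_zero]
    · -- n ≥ 2 : numerical contradiction
      have hcco : cco b' n = 0 := by
        obtain ⟨m, hm⟩ : ∃ m, n = m + 2 := ⟨n - 2, by omega⟩
        have h2 := d2_vv hK h0 m
        have hv : vv ρ w₀ (m + 2) = 0 := by rw [← hm]; exact hvn0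
        rw [hv, map_zero] at h2
        rw [hm]
        rcases smul_eq_zero.mp h2.symm with h | h
        · exact h
        · exact absurd h (hvl m (by omega))
      simp only [aco] at haco
      simp only [cco] at hcco
      have hkey : (n : ℂ) * ((n : ℂ) - 1) * ((n : ℂ) + 1) = 0 := by
        linear_combination 2 * hcco + 3 * ((n : ℂ) - 1) * haco
      rcases mul_eq_zero.mp hkey with h | h
      · rcases mul_eq_zero.mp h with h' | h'
        · have : n = 0 := by exact_mod_cast h'
          omega
        · have : (n : ℂ) = 1 := by linear_combination h'
          have : n = 1 := by exact_mod_cast this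
          omega
      · have : ((n + 1 : ℕ) : ℂ) = 0 := by push_cast; linear_combination h
        have : n + 1 = 0 := by exact_mod_cast this
        omega
  · -- independence: span{w₀} is the minimum nonzero 𝔟-submodule
    push_neg at hdep
    have hvne : ∀ k, vv ρ w₀ k ≠ 0 := by
      intro k hzero
      exact hdep k (by rw [hzero]; exact zero_mem _)
    have hind : LinearIndependent ℂ (vv ρ w₀) := by
      apply Module.End.eigenvectors_linearIndependent' (ρ.d 0 : Module.End ℂ W)
        (fun l : ℕ => b' - (l : ℂ))
      · intro l l' h
        have : ((l : ℕ) : ℂ) = ((l' : ℕ) : ℂ) := by push_cast; linear_combination -h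
        exact_mod_cast this
      · intro l
        exact ⟨Module.End.mem_eigenspace_iff.mpr (d0_vv h0 l), hvne l⟩
    refine ⟨U₀, hU₀B, hU₀ne, ?_⟩
    intro U hUB hUne
    have hw₀U : w₀ ∈ U := by
      obtain ⟨u, huU, hune⟩ := (Submodule.ne_bot_iff _).mp hUne
      obtain ⟨m, hm⟩ := spanning ρ hsimple U₀ hU₀B hU₀ne u
      obtain ⟨ξ, hξ⟩ := exp_Fn m u hm
      have hex : ∃ k₀ ∈ Finset.range (m + 1), ξ k₀ ≠ 0 := by
        by_contra h
        push_neg at h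
        apply hune
        rw [hξ]
        apply Finset.sum_eq_zero
        intro k hk
        rw [h k hk, zero_smul]
      obtain ⟨k₀, hk₀mem, hk₀ne⟩ := hex
      have hvk₀U : vv ρ w₀ k₀ ∈ U :=
        proj h0 U (fun x hx => hUB 0 le_rfl x hx) _ ξ (hξ ▸ huU) hk₀mem hk₀ne
      -- the minimal 𝔟-submodule containing vv k₀
      set M : Submodule ℂ W := sInf {U' : Submodule ℂ W | ρ.BInvariant U' ∧ vv ρ w₀ k₀ ∈ U'}
        with hMdef
      have hMB : ρ.BInvariant M := by
        intro i hi x hx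
        rw [Submodule.mem_sInf] at hx ⊢
        intro p hp
        exact hp.1 i hi x (hx p hp)
      have hvM : vv ρ w₀ k₀ ∈ M := Submodule.mem_sInf.mpr fun p hp => hp.2
      have hMU : M ≤ U := sInf_le ⟨hUB, hvk₀U⟩
      have hMY : M ≤ Ysp ρ w₀ k₀ :=
        sInf_le ⟨Ysp_binv hK h0 k₀, vv_mem_Ysp (le_refl k₀)⟩
      have hMne : M ≠ ⊥ := (Submodule.ne_bot_iff _).mpr ⟨vv ρ w₀ k₀, hvM, hvne k₀⟩
      -- split the filtration over M
      set Z : Submodule ℂ W := Submodule.span ℂ (Set.range (fun l : ℕ => vv ρ w₀ (l + 1)))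
        with hZdef
      have hTZ : ∀ a : ℕ, Submodule.map (Tp ρ (a + 1)) (Ysp ρ w₀ k₀) ≤ Z := by
        intro a
        rw [Ysp, Submodule.map_span]
        apply Submodule.span_le.mpr
        rintro _ ⟨_, ⟨j, rfl⟩, rfl⟩
        have : Tp ρ (a + 1) (vv ρ w₀ (j : ℕ)) = vv ρ w₀ ((a + (j : ℕ)) + 1) := by
          rw [Tp_vv]
          congr 1
          omega
        rw [this]
        exact Submodule.subset_span ⟨a + (j : ℕ), rfl⟩
      have hsplit : ∀ m', Fn ρ M m' ≤ M ⊔ Z := by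
        intro m'
        induction m' with
        | zero => exact le_sup_left
        | succ m' ih =>
          apply sup_le ih
          refine le_trans ?_ le_sup_right
          exact le_trans (Submodule.map_mono hMY) (hTZ m')
      obtain ⟨m', hm'⟩ := spanning ρ hsimple M hMB hMne w₀
      have hw₀sup : w₀ ∈ M ⊔ Z := hsplit m' hm'
      rcases Submodule.mem_sup.mp hw₀sup with ⟨xM, hxM, z, hz, hw₀eq⟩
      obtain ⟨ζ, hζ⟩ := (Submodule.mem_span_range_iff_exists_fun ℂ).mp (hMY hxM)
      by_cases hζ0 : ζ 0 = 0
      · exfalso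
        have hxZ : xM ∈ Z := by
          rw [← hζ, Fin.sum_univ_succ, hζ0, zero_smul, zero_add]
          apply Submodule.sum_mem
          intro l _
          apply Submodule.smul_mem
          apply Submodule.subset_span
          exact ⟨(l : ℕ), by rw [Fin.val_succ]⟩
        have hw₀Z : w₀ ∈ Z := by
          rw [← hw₀eq]
          exact add_mem hxZ hz
        have : vv ρ w₀ 0 ∉ Z := by
          have himg : Set.range (fun l : ℕ => vv ρ w₀ (l + 1))
              = vv ρ w₀ '' Set.range Nat.succ := by
            rw [← Set.range_comp]
            rfl
          rw [hZdef, himg]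
          apply hind.notMem_span_image
          rintro ⟨l, hl⟩
          exact Nat.succ_ne_zero l hl
        exact this (by rw [vv_zero]; exact hw₀Z)
      · -- project inside M
        set ξ' : ℕ → ℂ := fun l => if h : l < k₀ + 1 then ζ ⟨l, h⟩ else 0 with hξ'def
        have hsum : ∑ k ∈ Finset.range (k₀ + 1), ξ' k • vv ρ w₀ k = xM := by
          rw [Finset.sum_range fun i => ξ' i • vv ρ w₀ i]
          rw [← hζ]
          apply Finset.sum_congr rfl
          intro l _
          congr 1
          rw [hξ'def]
          simp only [Fin.is_lt, dif_pos, Fin.eta]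
        have hv0M : vv ρ w₀ 0 ∈ M := by
          apply proj h0 M (fun x hx => hMB 0 le_rfl x hx) _ ξ' (hsum ▸ hxM)
            (Finset.mem_range.mpr (by omega))
          rw [hξ'def]
          simpa using hζ0
        exact hMU (by rw [← vv_zero (ρ := ρ) (w₀ := w₀)]; exact hv0M)
    rw [hU₀def]
    apply Submodule.span_le.mpr
    intro x hx
    rw [Set.mem_singleton_iff.mp hx]
    exact hw₀U

end Stmt3Aux

namespace Stmt3Aux

variable {W : Type*} [AddCommGroup W] [Module ℂ W]

theorem exists_min (ρ : WittRep W) (hO : ρ.InO) (hnt : ¬ ρ.IsTrivial) (hsimple : ρ.IsSimple) :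
    ∃ V : Submodule ℂ W, ρ.BInvariant V ∧ V ≠ ⊥ ∧
      ∀ U : Submodule ℂ W, ρ.BInvariant U → U ≠ ⊥ → V ≤ U := by
  by_cases hK1 : KN ρ 1 = ⊥
  · exact caseA ρ hO hsimple hK1
  · exact caseB ρ hnt hsimple hK1

end Stmt3Aux

theorem stmt3' {W : Type*} [AddCommGroup W] [Module ℂ W] (ρ : WittRep W)
    (hO : ρ.InO) (hnt : ¬ ρ.IsTrivial) (hs : ρ.IsSimple) :
    ρ.BInvariant ρ.Soc ∧ ρ.Soc ≠ ⊥ ∧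
    (∀ U : Submodule ℂ W, ρ.BInvariant U → U ≤ ρ.Soc → U = ⊥ ∨ U = ρ.Soc) ∧
    ρ.Soc = sInf {U : Submodule ℂ W | ρ.BInvariant U ∧ U ≠ ⊥} := by
  obtain ⟨V, hVB, hVne, hVess⟩ := Stmt3Aux.exists_min ρ hO hnt hs
  have hset : {U : Submodule ℂ W | ρ.BInvariant U ∧ U ≠ ⊥ ∧
      ∀ U' : Submodule ℂ W, ρ.BInvariant U' → U' ≠ ⊥ → U' ≤ U → U' = U} = {V} := by
    ext U
    constructor
    · rintro ⟨hUB, hUne, hUmin⟩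
      exact Set.mem_singleton_iff.mpr (hUmin V hVB hVne (hVess U hUB hUne)).symm
    · rintro rfl
      exact ⟨hVB, hVne, fun U' hU'B hU'ne hle => le_antisymm hle (hVess U' hU'B hU'ne)⟩
  have hSoc : ρ.Soc = V := by
    rw [WittRep.Soc, hset, sSup_singleton]
  refine ⟨?_, ?_, ?_, ?_⟩
  · rw [hSoc]; exact hVB
  · rw [hSoc]; exact hVne
  · intro U hUB hUle
    by_cases hUbot : U = ⊥
    · exact Or.inl hUbot
    · right
      rw [hSoc] at hUle ⊢
      exact le_antisymm hUle (hVess U hUB hUbot)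
  · rw [hSoc]
    apply le_antisymm
    · refine le_sInf ?_
      rintro U ⟨hUB, hUne⟩
      exact hVess U hUB hUne
    · exact sInf_le (Set.mem_setOf.mpr ⟨hVB, hVne⟩)

theorem stmt3 {W : Type*} [AddCommGroup W] [Module ℂ W] (ρ : WittRep W)
    (hO : ρ.InO) (hnt : ¬ ρ.IsTrivial) (hs : ρ.IsSimple) :
    ρ.BInvariant ρ.Soc ∧ ρ.Soc ≠ ⊥ ∧
    (∀ U : Submodule ℂ W, ρ.BInvariant U → U ≤ ρ.Soc → U = ⊥ ∨ U = ρ.Soc) ∧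
    ρ.Soc = sInf {U : Submodule ℂ W | ρ.BInvariant U ∧ U ≠ ⊥} :=
  stmt3' ρ hO hnt hs
end

section
/- For any W ∈ O_𝔚, a, b ∈ ℂ and λ ∈ ℂ*, the vector space L(W, λ, a, b) = W ⊗ ℂ[t, t⁻¹] becomes a module over the Virasoro algebra 𝔙 under the action z · (w ⊗ t^j) = 0 and d_k · (w ⊗ t^j) = ((λ^k e^{kt} − 1) d/dt + a + kb + j) w ⊗ t^{k+j} for all k, j ∈ ℤ and w ∈ W; i.e., these formulas satisfy [d_m, d_n] · v = (d_m d_n − d_n d_m) · v for all m, n ∈ ℤ and v ∈ L(W, λ, a, b). -/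
/-! Identify `d_{i-1}` with the vector field `t^i d/dt`. On a module in `O_𝔚` every formal
vector field `f(t) d/dt`, `f ∈ ℂ⟦t⟧`, acts, since on a given vector only finitely many
coefficients of `f` matter; truncating `f` and `g` reduces the bracket rule
`[f d/dt, g d/dt] = (f g' - f' g) d/dt` to polynomials, where it follows by bilinearity from the
Witt relations. As `e^{kt} (e^{lt})' - (e^{kt})' e^{lt} = (l - k) e^{(k+l)t}`, the operators
`E_k = e^{kt} d/dt` satisfy `[E_k, E_l] = (l - k) E_{k+l}`, and with `d/dt = E_0` and
`λ^{m+n} = λ^m λ^n` the Virasoro relation on a pure tensor `w ⊗ t^j` is a linear combination of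
three such brackets. -/

namespace PowerSeries

lemma derivative_rescale {R : Type*} [CommSemiring R] (a : R) (f : R⟦X⟧) :
    d⁄dX R (rescale a f) = a • rescale a (d⁄dX R f) := by
  ext n
  simp only [coeff_derivative, coeff_rescale, coeff_smul, smul_eq_mul, pow_succ]
  ring

lemma rescale_exp_mul_derivative_sub {A : Type*} [CommRing A] [Algebra ℚ A] (a b : A) :
    rescale a (exp A) * d⁄dX A (rescale b (exp A)) - d⁄dX A (rescale a (exp A)) * rescale b (exp A)
      = (b - a) • rescale (a + b) (exp A) := by
  rw [derivative_rescale, derivative_rescale, derivative_exp, mul_smul_comm, smul_mul_assoc,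
    exp_mul_exp_eq_exp_add, sub_smul]

end PowerSeries

namespace WittRep

open scoped Polynomial PowerSeries

variable {W : Type*} [AddCommGroup W] [Module ℂ W] (ρ : WittRep W)

noncomputable def polyAct : ℂ[X] →ₗ[ℂ] Module.End ℂ W :=
  Polynomial.lsum fun i => LinearMap.toSpanSingleton ℂ _ (ρ.d ((i : ℤ) - 1))

lemma polyAct_apply (p : ℂ[X]) (w : W) :
    ρ.polyAct p w = p.sum fun i c => c • ρ.d ((i : ℤ) - 1) w := by
  simp [polyAct, Polynomial.sum_def]

lemma polyAct_monomial (i : ℕ) (c : ℂ) :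
    ρ.polyAct (Polynomial.monomial i c) = c • ρ.d ((i : ℤ) - 1) := by
  simp [polyAct]

lemma polyAct_comm (p q : ℂ[X]) :
    ρ.polyAct p * ρ.polyAct q - ρ.polyAct q * ρ.polyAct p =
      ρ.polyAct (p * Polynomial.derivative q - Polynomial.derivative p * q) := by
  induction p using Polynomial.induction_on' with
  | add p₁ p₂ h₁ h₂ =>
    linear_combination (norm := (simp only [map_add, map_sub, add_mul, mul_add]; abel)) h₁ + h₂
  | monomial i c =>
    induction q using Polynomial.induction_on' with
    | add q₁ q₂ h₁ h₂ =>
      linear_combination (norm := (simp only [map_add, map_sub, add_mul, mul_add]; abel)) h₁ + h₂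
    | monomial j e =>
      have hcomm : ρ.d ((i : ℤ) - 1) * ρ.d ((j : ℤ) - 1) - ρ.d ((j : ℤ) - 1) * ρ.d ((i : ℤ) - 1) =
          (((j : ℤ) - 1 - ((i : ℤ) - 1) : ℤ) : ℂ) • ρ.d ((i : ℤ) - 1 + ((j : ℤ) - 1)) :=
        ρ.comm _ _ (by omega) (by omega)
      simp only [Polynomial.derivative_monomial, Polynomial.monomial_mul_monomial, map_sub,
        polyAct_monomial, smul_mul_smul_comm, mul_comm e c, ← smul_sub, hcomm, smul_smul]
      rcases i with _ | i <;> rcases j with _ | j <;> push_cast <;> ring_nf <;> module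

lemma d_d_apply_eq_zero {w : W} {N : ℕ} (hw : ∀ i : ℤ, N ≤ i → ρ.d i w = 0) {j : ℤ}
    (hj : -1 ≤ j) : ∀ i : ℤ, (N + 1 : ℕ) ≤ i → ρ.d i (ρ.d j w) = 0 := by
  intro i hi
  have h := LinearMap.congr_fun (ρ.comm i j (by omega) hj) w
  simp only [LinearMap.sub_apply, LinearMap.comp_apply, LinearMap.smul_apply,
    hw i (by omega), hw (i + j) (by omega), map_zero, smul_zero, sub_zero] at h
  exact h

lemma d_polyAct_apply_eq_zero {w : W} {N : ℕ} (hw : ∀ i : ℤ, N ≤ i → ρ.d i w = 0) (p : ℂ[X]) :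
    ∀ i : ℤ, (N + 1 : ℕ) ≤ i → ρ.d i (ρ.polyAct p w) = 0 := by
  intro i hi
  rw [polyAct_apply, Polynomial.sum_def, map_sum]
  exact Finset.sum_eq_zero fun j _ => by
    rw [map_smul, ρ.d_d_apply_eq_zero hw (by omega) i hi, smul_zero]

noncomputable def seriesAct (f : ℂ⟦X⟧) (w : W) : W :=
  ∑ᶠ i : ℕ, PowerSeries.coeff i f • ρ.d ((i : ℤ) - 1) w

lemma seriesAct_coe (p : ℂ[X]) (w : W) : ρ.seriesAct p w = ρ.polyAct p w := by
  simp only [polyAct_apply, Polynomial.sum_def, seriesAct, Polynomial.coeff_coe]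
  refine finsum_eq_sum_of_support_subset _ fun i hi => ?_
  contrapose! hi
  simp_all

lemma seriesAct_eq_polyAct_trunc {w : W} {N M : ℕ} (hw : ∀ i : ℤ, N ≤ i → ρ.d i w = 0)
    (hM : N < M) (f : ℂ⟦X⟧) : ρ.seriesAct f w = ρ.polyAct (PowerSeries.trunc M f) w := by
  rw [← seriesAct_coe, seriesAct, seriesAct]
  refine finsum_congr fun i => ?_
  rw [Polynomial.coeff_coe, PowerSeries.coeff_trunc]
  split_ifs with hi
  · rfl
  · rw [hw _ (by omega), smul_zero, smul_zero]

lemma trunc_mul_derivative_trunc (n : ℕ) (f g : ℂ⟦X⟧) :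
    PowerSeries.trunc n ((PowerSeries.trunc (n + 1) f : ℂ⟦X⟧) *
        d⁄dX ℂ (PowerSeries.trunc (n + 1) g : ℂ⟦X⟧)) =
      PowerSeries.trunc n (f * d⁄dX ℂ g) := by
  rw [← PowerSeries.trunc_trunc_mul_trunc, PowerSeries.trunc_trunc_of_le _ (Nat.le_succ n),
    PowerSeries.trunc_derivative, PowerSeries.trunc_trunc, ← PowerSeries.trunc_derivative,
    PowerSeries.trunc_trunc_mul_trunc]

lemma seriesAct_comm (hO : ρ.InO) (f g : ℂ⟦X⟧) (w : W) :
    ρ.seriesAct f (ρ.seriesAct g w) - ρ.seriesAct g (ρ.seriesAct f w) =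
      ρ.seriesAct (f * d⁄dX ℂ g - d⁄dX ℂ f * g) w := by
  obtain ⟨N, hw⟩ := hO w
  have hw' : ∀ i : ℤ, (N + 1 : ℕ) ≤ i → ρ.d i w = 0 := fun i hi => hw i (by omega)
  set F := PowerSeries.trunc (N + 2) f
  set G := PowerSeries.trunc (N + 2) g
  have key : PowerSeries.trunc (N + 1)
      ((F : ℂ⟦X⟧) * d⁄dX ℂ (G : ℂ⟦X⟧) - d⁄dX ℂ (F : ℂ⟦X⟧) * (G : ℂ⟦X⟧)) =
        PowerSeries.trunc (N + 1) (f * d⁄dX ℂ g - d⁄dX ℂ f * g) := by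
    rw [PowerSeries.trunc_sub, PowerSeries.trunc_sub, mul_comm (d⁄dX ℂ (F : ℂ⟦X⟧)),
      mul_comm (d⁄dX ℂ f), trunc_mul_derivative_trunc, trunc_mul_derivative_trunc]
  calc _ = (ρ.polyAct F * ρ.polyAct G - ρ.polyAct G * ρ.polyAct F) w := by
        rw [ρ.seriesAct_eq_polyAct_trunc hw' (M := N + 2) (by omega) g,
          ρ.seriesAct_eq_polyAct_trunc hw' (M := N + 2) (by omega) f,
          ρ.seriesAct_eq_polyAct_trunc (ρ.d_polyAct_apply_eq_zero hw G) (Nat.lt_succ_self _) f,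
          ρ.seriesAct_eq_polyAct_trunc (ρ.d_polyAct_apply_eq_zero hw F) (Nat.lt_succ_self _) g]
        rfl
    _ = _ := by
        rw [polyAct_comm, ← seriesAct_coe, ρ.seriesAct_eq_polyAct_trunc hw (Nat.lt_succ_self N),
          ρ.seriesAct_eq_polyAct_trunc hw (Nat.lt_succ_self N)]
        push_cast
        rw [← PowerSeries.derivative_coe, ← PowerSeries.derivative_coe, key]

lemma seriesAct_smul (c : ℂ) (f : ℂ⟦X⟧) (w : W) :
    ρ.seriesAct (c • f) w = c • ρ.seriesAct f w := by
  simp only [seriesAct, smul_finsum, PowerSeries.coeff_smul, smul_eq_mul, mul_smul]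

lemma seriesAct_smul_right (f : ℂ⟦X⟧) (c : ℂ) (w : W) :
    ρ.seriesAct f (c • w) = c • ρ.seriesAct f w := by
  simp only [seriesAct, smul_finsum, map_smul, smul_comm c]

lemma seriesAct_add_right (hO : ρ.InO) (f : ℂ⟦X⟧) (u v : W) :
    ρ.seriesAct f (u + v) = ρ.seriesAct f u + ρ.seriesAct f v := by
  obtain ⟨Nu, hu⟩ := hO u
  obtain ⟨Nv, hv⟩ := hO v
  have hu' : ∀ i : ℤ, (Nu + Nv : ℕ) ≤ i → ρ.d i u = 0 := fun i hi => hu i (by omega)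
  have hv' : ∀ i : ℤ, (Nu + Nv : ℕ) ≤ i → ρ.d i v = 0 := fun i hi => hv i (by omega)
  have huv : ∀ i : ℤ, (Nu + Nv : ℕ) ≤ i → ρ.d i (u + v) = 0 := fun i hi => by
    rw [map_add, hu' i hi, hv' i hi, add_zero]
  rw [ρ.seriesAct_eq_polyAct_trunc hu' (Nat.lt_succ_self _),
    ρ.seriesAct_eq_polyAct_trunc hv' (Nat.lt_succ_self _),
    ρ.seriesAct_eq_polyAct_trunc huv (Nat.lt_succ_self _), map_add]

lemma E_eq_seriesAct (k : ℤ) (w : W) :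
    ρ.E k w = ρ.seriesAct (PowerSeries.rescale (k : ℂ) (PowerSeries.exp ℂ)) w := by
  simp [E, seriesAct, PowerSeries.coeff_rescale, div_eq_mul_inv]

lemma E_zero (w : W) : ρ.E 0 w = ρ.d (-1) w := by
  rw [E_eq_seriesAct, Int.cast_zero, PowerSeries.rescale_zero_apply,
    PowerSeries.constantCoeff_exp, map_one, seriesAct, finsum_eq_single _ 0]
  · simp
  · intro i hi
    simp [PowerSeries.coeff_one, hi]

lemma E_comm (hO : ρ.InO) (k l : ℤ) (w : W) :
    ρ.E k (ρ.E l w) - ρ.E l (ρ.E k w) = ((l : ℂ) - k) • ρ.E (k + l) w := by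
  simp only [E_eq_seriesAct, ρ.seriesAct_comm hO,
    PowerSeries.rescale_exp_mul_derivative_sub, seriesAct_smul, Int.cast_add]

lemma E_add (hO : ρ.InO) (k : ℤ) (u v : W) : ρ.E k (u + v) = ρ.E k u + ρ.E k v := by
  simp only [E_eq_seriesAct, ρ.seriesAct_add_right hO]

lemma E_smul (k : ℤ) (c : ℂ) (w : W) : ρ.E k (c • w) = c • ρ.E k w := by
  simp only [E_eq_seriesAct, seriesAct_smul_right]

lemma E_apply_zero (k : ℤ) : ρ.E k 0 = 0 := by
  simpa using ρ.E_smul k 0 0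

lemma E_sub (hO : ρ.InO) (k : ℤ) (u v : W) : ρ.E k (u - v) = ρ.E k u - ρ.E k v :=
  map_sub (AddMonoidHom.mk' (ρ.E k) (ρ.E_add hO k)) u v

lemma Lact_single (lam a b : ℂ) (k j : ℤ) (w : W) :
    ρ.Lact lam a b k (Finsupp.single j w) = Finsupp.single (k + j)
      (lam ^ k • ρ.E k w - ρ.d (-1) w + (a + k * b + j) • w) := by
  refine Finsupp.sum_single_index ?_
  rw [E_apply_zero, map_zero, smul_zero, smul_zero, sub_zero, add_zero, Finsupp.single_zero]

lemma Lact_zero (lam a b : ℂ) (k : ℤ) : ρ.Lact lam a b k 0 = 0 :=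
  Finsupp.sum_zero_index

lemma Lact_add (hO : ρ.InO) (lam a b : ℂ) (k : ℤ) (f g : ℤ →₀ W) :
    ρ.Lact lam a b k (f + g) = ρ.Lact lam a b k f + ρ.Lact lam a b k g := by
  refine Finsupp.sum_add_index (fun j _ => ?_) fun j _ u v => ?_
  · rw [E_apply_zero, map_zero, smul_zero, smul_zero, sub_zero, add_zero, Finsupp.single_zero]
  · rw [ρ.E_add hO, map_add, smul_add, smul_add, ← Finsupp.single_add]
    congr 1
    abel

lemma Lact_comm_single (hO : ρ.InO) {lam : ℂ} (hlam : lam ≠ 0) (a b : ℂ) (m n j : ℤ) (w : W) :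
    ρ.Lact lam a b m (ρ.Lact lam a b n (Finsupp.single j w)) -
        ρ.Lact lam a b n (ρ.Lact lam a b m (Finsupp.single j w)) =
      ((n - m : ℤ) : ℂ) • ρ.Lact lam a b (m + n) (Finsupp.single j w) := by
  simp only [Lact_single, ← add_assoc, add_comm n m, ← Finsupp.single_sub, Finsupp.smul_single]
  congr 1
  simp only [← E_zero, ρ.E_add hO, ρ.E_sub hO, E_smul, zpow_add₀ hlam]
  have hmn := ρ.E_comm hO m n w
  have h0n := ρ.E_comm hO 0 n w
  have h0m := ρ.E_comm hO 0 m w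
  simp only [zero_add, Int.cast_zero, sub_zero] at h0n h0m
  push_cast
  linear_combination (norm := module) (lam ^ m * lam ^ n) • hmn - lam ^ n • h0n + lam ^ m • h0m

end WittRep

theorem stmt4 {W : Type*} [AddCommGroup W] [Module ℂ W] (ρ : WittRep W)
    (hO : ρ.InO) (lam a b : ℂ) (hlam : lam ≠ 0) (m n : ℤ) (f : ℤ →₀ W) :
    ρ.Lact lam a b m (ρ.Lact lam a b n f) - ρ.Lact lam a b n (ρ.Lact lam a b m f)
      = (((n - m : ℤ) : ℂ)) • ρ.Lact lam a b (m + n) f := by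
  induction f using Finsupp.induction_linear with
  | zero => simp only [WittRep.Lact_zero, smul_zero, sub_zero]
  | add f g hf hg =>
    simp only [ρ.Lact_add hO, smul_add, ← hf, ← hg]
    abel
  | single j w => exact ρ.Lact_comm_single hO hlam a b m n j w
end

section
/- Let P be a ℂ-vector space and P₁ a subspace of P. Suppose λ₁, λ₂, …, λ_s ∈ ℂ* are pairwise distinct, v_{i,j} ∈ P, and f_{i,j}(t) ∈ ℂ[t] are polynomials with deg f_{i,j} = j, for i = 1, …, s and j = 0, 1, …, k. If Σ_{i=1}^s Σ_{j=0}^k λ_i^m f_{i,j}(m) v_{i,j} ∈ P₁ for all m ∈ ℤ, then v_{i,j} ∈ P₁ for all i and j. -/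
/-!
Modulo `P₁` and after applying an arbitrary linear functional `φ`, the hypothesis says that
`∑ i, λ_i ^ m * p_i(m) = 0` for all `m`, where `p_i = ∑ j, φ(v_ij) • f_ij`. Exponential
polynomials with distinct nonzero bases are linearly independent: the difference operator
`x(m) ↦ x(m + 1) - λ x(m)` with `λ = λ_{i₀}` lowers the degree of `p_{i₀}` and keeps every other
`p_i` nonzero, so induction on that degree applies. Hence every `p_i` vanishes, and since
`deg f_ij = j` this forces `φ(v_ij) = 0`.
-/

open Polynomial Finset

namespace Polynomial

variable {R : Type*}

theorem linearIndependent_of_degree_eq_val [Ring R] [IsDomain R] {k : ℕ} {f : Fin k → R[X]}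
    (hf : ∀ j, (f j).degree = ((j : ℕ) : WithBot ℕ)) : LinearIndependent R f := by
  let S : Sequence R :=
    { elems' := fun i => if h : i < k then f ⟨i, h⟩ else X ^ i
      degree_eq' := fun i => by split_ifs <;> simp [hf] }
  have hS : (fun j : Fin k => S j) = f := by
    funext j
    simp [S]
  exact hS ▸ S.linearIndependent.comp Fin.val Fin.val_injective

variable [CommRing R]

theorem degree_taylor_one_sub_lt {p : R[X]} (hp : p ≠ 0) : (taylor 1 p - p).degree < p.degree :=
  (degree_sub_lt_left (degree_taylor p 1) ((taylor_eq_zero 1 p).not.mpr hp)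
    (leadingCoeff_taylor 1 p)).trans_eq (degree_taylor p 1)

theorem sum_pow_mul_eval_smul_taylor_one_sub {ι : Type*} (s : Finset ι) (lam : ι → R) (μ : R)
    (p : ι → R[X]) (m : ℕ) :
    ∑ i ∈ s, lam i ^ m * (lam i • taylor 1 (p i) - μ • p i).eval (m : R) =
      ∑ i ∈ s, lam i ^ (m + 1) * (p i).eval ((m + 1 : ℕ) : R) -
        μ * ∑ i ∈ s, lam i ^ m * (p i).eval (m : R) := by
  simp only [mul_sum, ← sum_sub_distrib]
  refine sum_congr rfl fun i _ => ?_
  simp only [eval_sub, eval_smul, taylor_eval, smul_eq_mul, Nat.cast_succ]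
  ring

variable [IsDomain R]

theorem eq_zero_of_smul_taylor_one_eq_smul {c μ : R} (hcμ : c ≠ μ) {p : R[X]}
    (h : c • taylor 1 p = μ • p) : p = 0 := by
  by_contra hp
  have hlead := congrArg (coeff · p.natDegree) h
  simp only [coeff_smul, coeff_taylor_natDegree, smul_eq_mul, coeff_natDegree] at hlead
  exact hcμ (mul_right_cancel₀ (leadingCoeff_ne_zero.mpr hp) hlead)

theorem eq_zero_of_forall_eval_natCast_eq_zero [CharZero R] {p : R[X]}
    (h : ∀ n : ℕ, p.eval (n : R) = 0) : p = 0 :=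
  p.eq_zero_of_infinite_isRoot <| (Set.infinite_range_of_injective Nat.cast_injective).mono <|
    Set.range_subset_iff.mpr h

theorem eq_zero_of_forall_sum_pow_mul_eval_eq_zero [CharZero R] {ι : Type*} {s : Finset ι}
    {lam : ι → R} (hne : ∀ i ∈ s, lam i ≠ 0) (hinj : Set.InjOn lam s) {p : ι → R[X]}
    (h : ∀ m : ℕ, ∑ i ∈ s, lam i ^ m * (p i).eval (m : R) = 0) : ∀ i ∈ s, p i = 0 := by
  classical
  induction s using Finset.induction_on generalizing p with
  | empty => simp
  | insert i₀ s hi₀ ih =>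
    generalize hd : (p i₀).degree = d
    induction d using WellFoundedLT.induction generalizing p with
    | _ d ihd =>
    by_cases h0 : p i₀ = 0
    · have hs : ∀ i ∈ s, p i = 0 :=
        ih (fun i hi => hne i (mem_insert_of_mem hi)) (hinj.mono (subset_insert i₀ s))
          (fun m => by simpa [sum_insert hi₀, h0] using h m)
      intro i hi
      rcases mem_insert.mp hi with rfl | hi
      exacts [h0, hs i hi]
    · set q : ι → R[X] := fun i => lam i • taylor 1 (p i) - lam i₀ • p i
      have hq : ∀ i ∈ insert i₀ s, q i = 0 := by
        refine ihd _ ?_ (fun m => ?_) rfl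
        · calc (q i₀).degree = (lam i₀ • (taylor 1 (p i₀) - p i₀)).degree := by rw [smul_sub]
            _ ≤ (taylor 1 (p i₀) - p i₀).degree := degree_smul_le _ _
            _ < d := hd ▸ degree_taylor_one_sub_lt h0
        · simp only [q, sum_pow_mul_eval_smul_taylor_one_sub, h, mul_zero, sub_zero]
      have hs : ∀ i ∈ s, p i = 0 := fun i hi =>
        eq_zero_of_smul_taylor_one_eq_smul
          (fun he => hi₀ (hinj (mem_insert_of_mem hi) (mem_insert_self i₀ s) he ▸ hi))
          (sub_eq_zero.mp (hq i (mem_insert_of_mem hi)))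
      refine absurd (eq_zero_of_forall_eval_natCast_eq_zero fun m => ?_) h0
      have := h m
      rw [sum_insert hi₀, sum_eq_zero fun i hi => by rw [hs i hi, eval_zero, mul_zero],
        add_zero] at this
      exact (mul_eq_zero.mp this).resolve_left (pow_ne_zero m (hne i₀ (mem_insert_self i₀ s)))

end Polynomial

theorem stmt6 {P : Type*} [AddCommGroup P] [Module ℂ P] (P₁ : Submodule ℂ P)
    (s k : ℕ) (lam : Fin s → ℂ) (hne : ∀ i, lam i ≠ 0) (hinj : Function.Injective lam)
    (v : Fin s → Fin (k + 1) → P) (f : Fin s → Fin (k + 1) → Polynomial ℂ)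
    (hdeg : ∀ i j, (f i j).degree = ((j : ℕ) : WithBot ℕ))
    (hmem : ∀ m : ℤ, (∑ i, ∑ j, (lam i ^ m * (f i j).eval (m : ℂ)) • v i j) ∈ P₁) :
    ∀ i j, v i j ∈ P₁ := by
  intro i j
  rw [← Submodule.Quotient.mk_eq_zero]
  refine (Module.forall_dual_apply_eq_zero_iff ℂ _).mp fun φ => ?_
  have hpoly : ∀ i ∈ Finset.univ, ∑ j, φ (Submodule.Quotient.mk (v i j)) • f i j = 0 :=
    eq_zero_of_forall_sum_pow_mul_eval_eq_zero (fun i _ => hne i) hinj.injOn fun m => by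
      have hφ := congrArg φ ((Submodule.Quotient.mk_eq_zero P₁).mpr (hmem m))
      simpa [← Submodule.mkQ_apply, eval_finsetSum, mul_sum, mul_assoc, mul_comm (φ _)] using hφ
  exact Fintype.linearIndependent_iff.mp (linearIndependent_of_degree_eq_val (hdeg i)) _
    (hpoly i (Finset.mem_univ i)) j
end
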